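/- arXiv:1601.01768 — 6 statements merged into one kernel-verified Lean document; each statement's English description precedes it below -/
import Mathlib

section
/- Every bipartite graph is ideally [3,4]-choosable: for every list assignment L with L(v) ⊆ {1,2,3,4} and |L(v)| = 3 for all vertices v, every vertex v₀ and every color c ∈ L(v₀), there is a list coloring for L assigning color c to v₀. -/
open SimpleGraph

/-- A list coloring: proper coloring with each vertex colored from its list. -/
def IsListColoring {V : Type*} (G : SimpleGraph V) (L : V → Finset ℕ) (c : V → ℕ) : Prop :=
  (∀ v, c v ∈ L v) ∧ ∀ u v, G.Adj u v → c u ≠ c v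

/-- A list assignment is feasible if some list coloring exists. -/
def Feasible {V : Type*} (G : SimpleGraph V) (L : V → Finset ℕ) : Prop :=
  ∃ c, IsListColoring G L c

/-- `[f,k]`-choosability: every list assignment with colors in `{1,…,k}` and
list sizes given by `f` is feasible. -/
def ChoosableF {V : Type*} (G : SimpleGraph V) (f : V → ℕ) (k : ℕ) : Prop :=
  ∀ L : V → Finset ℕ, (∀ v, L v ⊆ Finset.Icc 1 k) → (∀ v, (L v).card = f v) →
    Feasible G L

/-- `[ℓ,k]`-choosability. -/
def Choosable {V : Type*} (G : SimpleGraph V) (ℓ k : ℕ) : Prop :=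
  ChoosableF G (fun _ => ℓ) k

/-- Ideal `[ℓ,k]`-choosability: any color of any vertex's list can be extended
to a full list coloring. -/
def IdeallyChoosable {V : Type*} (G : SimpleGraph V) (ℓ k : ℕ) : Prop :=
  ∀ L : V → Finset ℕ, (∀ v, L v ⊆ Finset.Icc 1 k) → (∀ v, (L v).card = ℓ) →
    ∀ v₀ : V, ∀ c ∈ L v₀, ∃ col, IsListColoring G L col ∧ col v₀ = c

/-- A block: a maximal (vertex) set inducing a connected subgraph with no cut vertex. -/
def IsBlock {V : Type*} (G : SimpleGraph V) (B : Set V) : Prop :=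
  ((G.induce B).Connected ∧ ∀ v ∈ B, (G.induce (B \ {v})).Preconnected) ∧
  ∀ B' : Set V, B ⊆ B' →
    ((G.induce B').Connected ∧ ∀ v ∈ B', (G.induce (B' \ {v})).Preconnected) → B' = B

/-- Every bipartite graph is ideally `[3,4]`-choosable. -/
theorem bipartite_ideally_choosable_three_four {V : Type*} (G : SimpleGraph V)
    (hbip : ∃ s : Set V, ∀ u v : V, G.Adj u v → (u ∈ s ↔ v ∉ s)) :
    IdeallyChoosable G 3 4 := by
  classical
  intro L hsub hcard v₀ c hc
  obtain ⟨s, hs⟩ := hbip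
  set P : Finset ℕ := if c ≤ 2 then {1, 2} else {3, 4} with hP
  set Q : Finset ℕ := if c ≤ 2 then {3, 4} else {1, 2} with hQ
  have hcIcc : 1 ≤ c ∧ c ≤ 4 := by
    have := hsub v₀ hc
    simpa [Finset.mem_Icc] using this
  have hcP : c ∈ P := by
    by_cases h : c ≤ 2 <;> simp [hP, h] <;> omega
  have hdisj : ∀ x ∈ P, ∀ y ∈ Q, x ≠ y := by
    by_cases h : c ≤ 2 <;> simp [hP, hQ, h] 
  have hne : ∀ T : Finset ℕ, T.card = 2 → T ⊆ Finset.Icc 1 4 →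
      ∀ v, (L v ∩ T).Nonempty := by
    intro T hT2 hTsub v
    rw [← Finset.card_pos]
    have hu : (L v ∪ T).card ≤ 4 := by
      have hsub' : L v ∪ T ⊆ Finset.Icc 1 4 := Finset.union_subset (hsub v) hTsub
      have := Finset.card_le_card hsub'
      simpa using this
    have h2 := Finset.card_union_add_card_inter (L v) T
    have h3 := hcard v
    omega
  have hPcard : P.card = 2 := by by_cases h : c ≤ 2 <;> simp [hP, h]
  have hQcard : Q.card = 2 := by by_cases h : c ≤ 2 <;> simp [hQ, h]
  have hPsub : P ⊆ Finset.Icc 1 4 := by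
    by_cases h : c ≤ 2 <;> intro x hx <;> simp [hP, h] at hx <;>
      simp [Finset.mem_Icc] <;> omega
  have hQsub : Q ⊆ Finset.Icc 1 4 := by
    by_cases h : c ≤ 2 <;> intro x hx <;> simp [hQ, h] at hx <;>
      simp [Finset.mem_Icc] <;> omega
  have hPne : ∀ v, (L v ∩ P).Nonempty := hne P hPcard hPsub
  have hQne : ∀ v, (L v ∩ Q).Nonempty := hne Q hQcard hQsub
  set col : V → ℕ := fun v =>
    if (v ∈ s ↔ v₀ ∈ s) then (if v = v₀ then c else (hPne v).choose)
    else (hQne v).choose with hcol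
  have hmemP : ∀ v, (v ∈ s ↔ v₀ ∈ s) → col v ∈ L v ∩ P := by
    intro v hv
    by_cases h : v = v₀
    · subst h; simpa [hcol, hv] using Finset.mem_inter.mpr ⟨hc, hcP⟩
    · simpa [hcol, hv, h] using (hPne v).choose_spec
  have hmemQ : ∀ v, ¬(v ∈ s ↔ v₀ ∈ s) → col v ∈ L v ∩ Q := by
    intro v hv
    simpa [hcol, hv] using (hQne v).choose_spec
  refine ⟨col, ⟨?_, ?_⟩, ?_⟩
  · intro v
    by_cases hv : (v ∈ s ↔ v₀ ∈ s)
    · exact (Finset.mem_inter.mp (hmemP v hv)).1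
    · exact (Finset.mem_inter.mp (hmemQ v hv)).1
  · intro u v huv
    have hside := hs u v huv
    by_cases hu : (u ∈ s ↔ v₀ ∈ s)
    · have hv : ¬(v ∈ s ↔ v₀ ∈ s) := by tauto
      exact hdisj _ (Finset.mem_inter.mp (hmemP u hu)).2 _
        (Finset.mem_inter.mp (hmemQ v hv)).2
    · have hv : (v ∈ s ↔ v₀ ∈ s) := by tauto
      exact fun h => hdisj _ (Finset.mem_inter.mp (hmemP v hv)).2 _
        (Finset.mem_inter.mp (hmemQ u hu)).2 h.symm
  · simp [hcol]
end

section
/- Let G be a bipartite graph, let v be a vertex of G, and let G' be the graph obtained from G by removing v, merging all neighbors of v into a single vertex v', and replacing each resulting family of parallel edges by a single edge. Then for every k ≥ 2: if G is [2,k]-choosable, then G' is [2,k]-choosable. -/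
open SimpleGraph

/-- The graph `G'` obtained from `G` by deleting the vertex `v` and merging all
its neighbors into a single new vertex `v'` (represented by `none`), parallel
edges being merged. The remaining vertices are those distinct from `v` and not
adjacent to `v`. -/
def contractNbhd {V : Type*} (G : SimpleGraph V) (v : V) :
    SimpleGraph (Option {u : V // u ≠ v ∧ ¬ G.Adj v u}) where
  Adj x y :=
    match x, y with
    | none, none => False
    | none, some b => ∃ w, G.Adj v w ∧ G.Adj w b.1
    | some a, none => ∃ w, G.Adj v w ∧ G.Adj a.1 w
    | some a, some b => G.Adj a.1 b.1
  symm := by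
    refine ⟨?_⟩
    rintro (_ | a) (_ | b) h
    · exact h.elim
    · obtain ⟨w, h1, h2⟩ := h
      exact ⟨w, h1, h2.symm⟩
    · obtain ⟨w, h1, h2⟩ := h
      exact ⟨w, h1, h2.symm⟩
    · exact h.symm
  loopless := by
    refine ⟨?_⟩
    rintro (_ | a) h
    · exact h.elim
    · exact G.irrefl h

/-!
Give `v` and all of its neighbours the list of the merged vertex `v'`, keep all other lists,
and colour `G`. The neighbours of `v` avoid the colour of `v` within a list of two colours,
so they all receive the other one; giving it to `v'` yields a list colouring of `G'`.
-/

open Finset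

namespace contractNbhd

variable {V α : Type*} {G : SimpleGraph V} {v : V}

open Classical in
noncomputable def pullback (G : SimpleGraph V) (v : V)
    (L : Option {u : V // u ≠ v ∧ ¬ G.Adj v u} → α) (u : V) : α :=
  if h : u ≠ v ∧ ¬ G.Adj v u then L (some ⟨u, h⟩) else L none

variable {L : Option {u : V // u ≠ v ∧ ¬ G.Adj v u} → α}

theorem pullback_some (u : {u : V // u ≠ v ∧ ¬ G.Adj v u}) :
    pullback G v L u.1 = L (some u) :=
  dif_pos u.2

theorem pullback_self : pullback G v L v = L none :=
  dif_neg fun h => h.1 rfl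

theorem pullback_of_adj {w : V} (hw : G.Adj v w) : pullback G v L w = L none :=
  dif_neg fun h => h.2 hw

theorem exists_pullback_eq (u : V) : ∃ o, pullback G v L u = L o := by
  unfold pullback
  split
  exacts [⟨_, rfl⟩, ⟨_, rfl⟩]

end contractNbhd

open contractNbhd in
theorem feasible_contractNbhd_of_feasible_pullback {V : Type*} {G : SimpleGraph V} {v : V}
    {L : Option {u : V // u ≠ v ∧ ¬ G.Adj v u} → Finset ℕ} (hL : (L none).card = 2)
    (h : Feasible G (pullback G v L)) : Feasible (contractNbhd G v) L := by
  obtain ⟨c, hmem, hproper⟩ := h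
  have hv : c v ∈ L none := pullback_self (L := L) ▸ hmem v
  obtain ⟨x, hx⟩ : ∃ x, (L none).erase (c v) = {x} :=
    card_eq_one.mp (by rw [card_erase_of_mem hv, hL])
  have hnbr : ∀ w, G.Adj v w → c w = x := fun w hw => by
    have hw' : c w ∈ (L none).erase (c v) :=
      mem_erase.mpr ⟨(hproper v w hw).symm, pullback_of_adj (L := L) hw ▸ hmem w⟩
    simpa [hx] using hw'
  refine ⟨fun o => o.elim x fun u => c u.1, ?_, ?_⟩
  · rintro (_ | u)
    · exact mem_of_mem_erase (hx ▸ mem_singleton_self x)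
    · exact pullback_some (L := L) u ▸ hmem u.1
  · rintro (_ | p) (_ | q) hpq
    · exact hpq.elim
    · obtain ⟨w, hvw, hwq⟩ := hpq
      exact hnbr w hvw ▸ hproper w q.1 hwq
    · obtain ⟨w, hvw, hpw⟩ := hpq
      exact hnbr w hvw ▸ hproper p.1 w hpw
    · exact hproper p.1 q.1 hpq

theorem contractNbhd_choosable_general {V : Type*} (G : SimpleGraph V)
    (v : V) (k : ℕ) (hG : Choosable G 2 k) :
    Choosable (contractNbhd G v) 2 k := by
  intro L hsub hcard
  refine feasible_contractNbhd_of_feasible_pullback (hcard none) (hG _ (fun u => ?_) fun u => ?_)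
  all_goals
    obtain ⟨o, ho⟩ := contractNbhd.exists_pullback_eq (L := L) u
    rw [ho]
  exacts [hsub o, hcard o]

/-- If a bipartite graph `G` is `[2,k]`-choosable (`k ≥ 2`), then the graph `G'`
obtained by removing a vertex `v` and merging its neighborhood into one vertex
is `[2,k]`-choosable. -/
theorem contractNbhd_choosable {V : Type*} (G : SimpleGraph V)
    (hbip : ∃ s : Set V, ∀ u w : V, G.Adj u w → (u ∈ s ↔ w ∉ s))
    (v : V) (k : ℕ) (hk : 2 ≤ k) (hG : Choosable G 2 k) :
    Choosable (contractNbhd G v) 2 k :=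
  contractNbhd_choosable_general G v k hG
end

section
/- Let H be a connected bipartite graph with minimum degree at least 2 that is not isomorphic to any complete bipartite graph K_{2,m} (m ≥ 1). If H contains K_{2,4} = θ_{2,2,2,2} as a subgraph and does not contain any Γ_{2p,2q,r} with p,q ≥ 2 and r ≥ 0 as a partial induced subgraph, then H contains θ_{2,2,2,2m} for some m ≥ 2 as a partial induced subgraph. -/
open SimpleGraph

/-- `P` is contained in `H` as a subgraph (equivalently, as a partial induced
subgraph): there is a map of vertices, injective on the support of `P`
(`P` has no isolated vertices in our uses), preserving adjacency. -/
def ContainsSub {W V : Type*} (H : SimpleGraph V) (P : SimpleGraph W) : Prop :=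
  ∃ f : W → V, Set.InjOn f P.support ∧ ∀ a b : W, P.Adj a b → H.Adj (f a) (f b)

/-- The theta graph `θ_{2,2,2,d}` (for `d ≥ 2`), on vertex labels `0,…,d+3` of `ℕ`:
hubs `0,1`, midpoints `2,3,4` of the three paths of length 2, and internal path
vertices `5,…,d+3` of the path of length `d` between the hubs. -/
def theta4 (d : ℕ) : SimpleGraph ℕ :=
  SimpleGraph.fromEdgeSet
    ({s(0, 2), s(1, 2), s(0, 3), s(1, 3), s(0, 4), s(1, 4), s(0, 5), s(d + 3, 1)} ∪
      {e : Sym2 ℕ | ∃ i : ℕ, 5 ≤ i ∧ i < d + 3 ∧ e = s(i, i + 1)})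

/-- The graph `Γ_{cp,cq,r}`: two disjoint cycles of lengths `cp` and `cq` joined by a
path of length `r` (sharing one vertex when `r = 0`), on vertex labels in `ℕ`.
The first cycle uses labels `0,…,cp-1`; `Pv j` is the `j`-th vertex of the
connecting path and `Cv i` the `i`-th vertex of the second cycle. -/
def gammaG (cp cq r : ℕ) : SimpleGraph ℕ :=
  let Pv : ℕ → ℕ := fun j => if j = 0 then 0 else cp - 1 + j
  let Cv : ℕ → ℕ := fun i => if i = 0 then Pv r else cp + r - 1 + i
  SimpleGraph.fromEdgeSet
    ({e : Sym2 ℕ | ∃ i : ℕ, i < cp ∧ e = s(i, (i + 1) % cp)} ∪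
      {e : Sym2 ℕ | ∃ j : ℕ, j < r ∧ e = s(Pv j, Pv (j + 1))} ∪
      {e : Sym2 ℕ | ∃ i : ℕ, i < cq ∧ e = s(Cv i, Cv ((i + 1) % cq))})

/-!
Let `u, v` be the hubs and `x₀, …, x₃` the common neighbours of a `K_{2,4}` in `H`; `H` is
bipartite, so every cycle is even, and `u, v` lie on the same side. Two distinct common neighbours
joined by a path avoiding `u, v` and with no common neighbour inside would close an even cycle
through `u` meeting the 4-cycle `u xᵢ v xⱼ` only in `u`, a forbidden `Γ_{2p,4,0}`.

Since `H ≇ K_{2,m}`, some `w ∉ {u, v}` is not a common neighbour; let `T` be its component in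
`H - {u, v}`. By the above, `T` contains at most one `xᵢ`. If `u` and `v` have distinct
neighbours `t₁, t₂ ∈ T`, then `u t₁ ⋯ t₂ v` (a path through `T`, even and of length at least 4)
together with three `xᵢ ∉ T` is the required `θ_{2,2,2,2m}`. Otherwise some hub `y₀` has a
neighbour in `T`. Either the other hub `y₁` has one too, necessarily the same vertex `t`, and every
vertex of `T` but `t` has all its neighbours in `T`; or it has none, and every vertex of
`T ∪ {y₀}` but `y₀` has all its neighbours in `T ∪ {y₀}`. By minimum degree 2 that set contains a
cycle, which, joined to `y₀` through `T`, forms with the 4-cycle `y₀ xᵢ y₁ xⱼ` a forbidden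
`Γ_{2p,4,r}`.
-/

open Finset in
theorem Finset.exists_ne_not_of_card_filter_add_two_le {ι : Type*} [Fintype ι] (p : ι → Prop)
    [DecidablePred p] (h : #(univ.filter p) + 2 ≤ Fintype.card ι) :
    ∃ i j, i ≠ j ∧ ¬ p i ∧ ¬ p j := by
  have := card_filter_add_card_filter_not (s := univ) p
  obtain ⟨i, hi, j, hj, hij⟩ :=
    one_lt_card.mp (by rw [card_univ] at this; omega : 1 < #(univ.filter fun i => ¬ p i))
  exact ⟨i, j, hij, (mem_filter.mp hi).2, (mem_filter.mp hj).2⟩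

open Finset in
theorem Finset.exists_ne_ne_not_of_card_filter_add_three_le {ι : Type*} [Fintype ι]
    (p : ι → Prop) [DecidablePred p] (h : #(univ.filter p) + 3 ≤ Fintype.card ι) :
    ∃ i j k, i ≠ j ∧ i ≠ k ∧ j ≠ k ∧ ¬ p i ∧ ¬ p j ∧ ¬ p k := by
  have := card_filter_add_card_filter_not (s := univ) p
  obtain ⟨i, hi, j, hj, k, hk, hij, hik, hjk⟩ :=
    two_lt_card.mp (by rw [card_univ] at this; omega : 2 < #(univ.filter fun i => ¬ p i))
  exact ⟨i, j, k, hij, hik, hjk, (mem_filter.mp hi).2, (mem_filter.mp hj).2,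
    (mem_filter.mp hk).2⟩

namespace SimpleGraph

variable {V : Type*} {G : SimpleGraph V}

theorem Coloring.eq_of_adj_of_adj (c : G.Coloring Bool) {u v x : V} (hu : G.Adj u x)
    (hv : G.Adj v x) : c u = c v := by
  have h₁ := c.valid hu
  have h₂ := c.valid hv
  revert h₁ h₂
  cases c u <;> cases c v <;> cases c x <;> simp

theorem Coloring.even_length_of_loop (c : G.Coloring Bool) {u : V} (C : G.Walk u u) :
    Even C.length :=
  (c.even_length_iff_congr C).mpr Iff.rfl

theorem exists_ne_adj_of_two_le_degree {v : V} [Fintype (G.neighborSet v)]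
    (h : 2 ≤ G.degree v) : ∃ a b, a ≠ b ∧ G.Adj v a ∧ G.Adj v b := by
  rw [← card_neighborFinset_eq_degree] at h
  obtain ⟨a, ha, b, hb, hab⟩ := Finset.one_lt_card.mp h
  exact ⟨a, b, hab, (mem_neighborFinset _ _ _).mp ha, (mem_neighborFinset _ _ _).mp hb⟩

/-- An end of a longest path other than `e` has two neighbours, both on the path by maximality;
in an acyclic graph both would have to be its successor on the path. -/
theorem not_isAcyclic_of_exists_two_adj [Finite V] {e t : V} (hte : t ≠ e)
    (h : ∀ v, v ≠ e → ∃ a b, a ≠ b ∧ G.Adj v a ∧ G.Adj v b) : ¬ G.IsAcyclic := by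
  intro hG
  have : Nonempty V := ⟨t⟩
  have hend : ∀ {a b : V} (p : G.Walk a b), p.IsPath →
      (∀ (a' b' : V) (p' : G.Walk a' b'), p'.IsPath → p'.length ≤ p.length) → a ≠ e → False := by
    intro a b p hp hmax ha
    obtain ⟨n₁, n₂, hne, h₁, h₂⟩ := h a ha
    have hsnd : ∀ n, G.Adj a n → n = p.snd := fun n hn =>
      hG.eq_snd_of_adj_start hp hn <| by
        by_contra hn'
        have := hmax _ _ _ (hp.cons hn' (h := hn.symm))
        simp at this
    exact hne ((hsnd n₁ h₁).trans (hsnd n₂ h₂).symm)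
  obtain ⟨a, b, p, hp, hmax⟩ := Walk.exists_isPath_forall_isPath_length_le_length G
  obtain ⟨n, -, -, hn, -⟩ := h t hte
  have hlen : 1 ≤ p.length := hmax _ _ (Walk.cons hn Walk.nil) (by simp [hn.ne])
  have hab : a ≠ b := fun hab => by
    rw [← hp.nil_iff_eq, ← Walk.length_eq_zero_iff] at hab
    omega
  by_cases ha : a = e
  · exact hend p.reverse hp.reverse (by simpa using hmax) (ha ▸ hab).symm
  · exact hend p hp hmax ha

theorem exists_isCycle_support_subset [Fintype V] [DecidableRel G.Adj] {S : Set V} {e t : V}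
    (he : e ∈ S) (ht : t ∈ S) (hte : t ≠ e)
    (hS : ∀ v ∈ S, v ≠ e → G.neighborSet v ⊆ S) (hdeg : ∀ v ∈ S, v ≠ e → 2 ≤ G.degree v) :
    ∃ (z : V) (C : G.Walk z z), C.IsCycle ∧ ∀ y ∈ C.support, y ∈ S := by
  have hcyc := not_isAcyclic_of_exists_two_adj (G := G.induce S) (e := ⟨e, he⟩) (t := ⟨t, ht⟩)
    (by simpa using hte) fun ⟨v, hv⟩ hve => by
      have hve : v ≠ e := by simpa using hve
      obtain ⟨a, b, hab, ha, hb⟩ := exists_ne_adj_of_two_le_degree (hdeg v hv hve)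
      exact ⟨⟨a, hS v hv hve ha⟩, ⟨b, hS v hv hve hb⟩, by simpa using hab, ha, hb⟩
  simp only [IsAcyclic, not_forall, not_not] at hcyc
  obtain ⟨z, C, hC⟩ := hcyc
  let φ := Embedding.induce (G := G) S
  refine ⟨_, C.map φ.toHom, hC.map φ.injective, fun y hy => ?_⟩
  rw [Walk.support_map, List.mem_map] at hy
  obtain ⟨y, -, rfl⟩ := hy
  exact y.2

theorem Walk.exists_isPath_support_tail_disjoint {Z : Set V} {a b : V} (p : G.Walk a b)
    (hp : ∃ y ∈ p.support, y ∈ Z) :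
    ∃ z ∈ Z, ∃ q : G.Walk z b, q.IsPath ∧ (∀ y ∈ q.support, y ∈ p.support) ∧
      ∀ y ∈ q.support.tail, y ∉ Z := by
  classical
  induction p with
  | nil =>
    obtain ⟨y, hy, hyZ⟩ := hp
    rw [support_nil, List.mem_singleton] at hy
    exact ⟨_, hy ▸ hyZ, nil, .nil, fun _ => id, by simp⟩
  | @cons a c b h q ih =>
    by_cases hq : ∃ y ∈ q.support, y ∈ Z
    · obtain ⟨z, hz, r, hr, hrq, hrZ⟩ := ih hq
      exact ⟨z, hz, r, hr, fun y hy => List.mem_cons_of_mem _ (hrq y hy), hrZ⟩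
    push Not at hq
    have haZ : a ∈ Z := by
      obtain ⟨y, hy, hyZ⟩ := hp
      rcases List.mem_cons.mp hy with rfl | hy
      · exact hyZ
      · exact absurd hyZ (hq y hy)
    have hbyp := q.support_bypass_subset_support
    refine ⟨a, haZ, cons h q.bypass, q.bypass_isPath.cons fun ha => hq a (hbyp ha) haZ,
      fun y hy => ?_, fun y hy => hq y (hbyp (by simpa using hy))⟩
    rcases List.mem_cons.mp hy with rfl | hy
    · exact List.mem_cons_self
    · exact List.mem_cons_of_mem _ (hbyp hy)

theorem Walk.getVert_succ_mod_length {x : V} (C : G.Walk x x) {i : ℕ} (hi : i < C.length) :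
    C.getVert ((i + 1) % C.length) = C.getVert (i + 1) := by
  rcases (Nat.add_one_le_of_lt hi).lt_or_eq with h | h
  · rw [Nat.mod_eq_of_lt h]
  · rw [h, Nat.mod_self, getVert_zero, getVert_length]

theorem support_fromEdgeSet_subset {W : Type*} (E : Set (Sym2 W)) :
    (fromEdgeSet E).support ⊆ {z | ∃ e ∈ E, z ∈ e} := by
  rintro z ⟨y, h⟩
  exact ⟨s(z, y), ((fromEdgeSet_adj E).mp h).1, Sym2.mem_mk_left z y⟩

theorem containsSub_fromEdgeSet {W : Type*} {E : Set (Sym2 W)} {f : W → V}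
    (hinj : Set.InjOn f (fromEdgeSet E).support)
    (hE : ∀ e ∈ E, ¬ e.IsDiag → e.map f ∈ G.edgeSet) : ContainsSub G (fromEdgeSet E) := by
  refine ⟨f, hinj, fun a b h => ?_⟩
  rw [fromEdgeSet_adj] at h
  simpa using hE _ h.1 (by simpa using h.2)

theorem theta4_support_subset {d : ℕ} (hd : 2 ≤ d) : (theta4 d).support ⊆ Set.Iio (d + 4) := by
  refine (support_fromEdgeSet_subset _).trans ?_
  rintro z ⟨e, he, hz⟩
  simp only [Set.mem_union, Set.mem_insert_iff, Set.mem_singleton_iff, Set.mem_ofPred_eq] at he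
  rcases he with (rfl | rfl | rfl | rfl | rfl | rfl | rfl | rfl) | ⟨i, -, hi, rfl⟩ <;>
    simp only [Sym2.mem_iff] at hz <;> simp only [Set.mem_Iio] <;> omega

section theta

variable {u v : V} (P : G.Walk u v) (a b c : V)

def thetaMap : ℕ → V := fun m =>
  if m = 0 then u else if m = 1 then v else if m = 2 then a else if m = 3 then b
  else if m = 4 then c else P.getVert (m - 4)

theorem thetaMap_of_five_le {m : ℕ} (hm : 5 ≤ m) : thetaMap P a b c m = P.getVert (m - 4) := by
  simp only [thetaMap]
  rw [if_neg (by omega), if_neg (by omega), if_neg (by omega), if_neg (by omega),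
    if_neg (by omega)]

variable {P a b c}

theorem thetaMap_injOn (hP : P.IsPath) (hlen : 1 ≤ P.length) (hab : a ≠ b) (hac : a ≠ c)
    (hbc : b ≠ c) (hua : G.Adj u a) (hva : G.Adj v a) (hub : G.Adj u b) (hvb : G.Adj v b)
    (huc : G.Adj u c) (hvc : G.Adj v c)
    (ha : a ∉ P.support) (hb : b ∉ P.support) (hc : c ∉ P.support) :
    Set.InjOn (thetaMap P a b c) (Set.Iio (P.length + 4)) := by
  have huv : u ≠ v := fun h => by
    have := (hP.getVert_eq_end_iff (Nat.zero_le _)).mp (by rw [P.getVert_zero, h])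
    omega
  have hint : ∀ k, 1 ≤ k → k < P.length →
      P.getVert k ≠ u ∧ P.getVert k ≠ v ∧ P.getVert k ≠ a ∧ P.getVert k ≠ b ∧
        P.getVert k ≠ c := fun k hk₁ hk₂ => by
    have hmem := P.getVert_mem_support k
    refine ⟨fun h => ?_, fun h => ?_, fun h => ha (h ▸ hmem), fun h => hb (h ▸ hmem),
      fun h => hc (h ▸ hmem)⟩
    · have := (hP.getVert_eq_start_iff hk₂.le).mp h; omega
    · have := (hP.getVert_eq_end_iff hk₂.le).mp h; omega
  have hsplit : Set.Iio (P.length + 4) = Set.Iio 5 ∪ Set.Ico 5 (P.length + 4) := by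
    ext m; simp only [Set.mem_Iio, Set.mem_union, Set.mem_Ico]; omega
  rw [hsplit, Set.injOn_union (Set.disjoint_left.mpr fun m h₁ h₂ => by
    simp only [Set.mem_Iio, Set.mem_Ico] at h₁ h₂; omega)]
  refine ⟨fun m₁ h₁ m₂ h₂ h => ?_, fun m₁ h₁ m₂ h₂ h => ?_, fun m₁ h₁ m₂ h₂ h => ?_⟩
  · have := hua.ne; have := hub.ne; have := huc.ne; have := hva.ne; have := hvb.ne
    have := hvc.ne
    simp only [Set.mem_Iio] at h₁ h₂
    interval_cases m₁ <;> interval_cases m₂ <;> simp only [thetaMap] at h <;>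
      first | rfl | exact absurd h ‹_› | exact absurd h.symm ‹_›
  · simp only [Set.mem_Ico] at h₁ h₂
    rw [thetaMap_of_five_le P a b c h₁.1, thetaMap_of_five_le P a b c h₂.1] at h
    have := hP.getVert_injOn (by simp only [Set.mem_ofPred_eq]; omega)
      (by simp only [Set.mem_ofPred_eq]; omega) h
    omega
  · simp only [Set.mem_Iio, Set.mem_Ico] at h₁ h₂
    rw [thetaMap_of_five_le P a b c h₂.1] at h
    have := hint (m₂ - 4) (by omega) (by omega)
    interval_cases m₁ <;> simp [thetaMap] at h <;> simp_all

theorem containsSub_theta4 (hP : P.IsPath) (hlen : 2 ≤ P.length) (hab : a ≠ b) (hac : a ≠ c)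
    (hbc : b ≠ c) (hua : G.Adj u a) (hva : G.Adj v a) (hub : G.Adj u b) (hvb : G.Adj v b)
    (huc : G.Adj u c) (hvc : G.Adj v c)
    (ha : a ∉ P.support) (hb : b ∉ P.support) (hc : c ∉ P.support) :
    ContainsSub G (theta4 P.length) := by
  refine containsSub_fromEdgeSet (f := thetaMap P a b c) ((thetaMap_injOn hP (by omega) hab hac hbc
    hua hva hub hvb huc hvc ha hb hc).mono (theta4_support_subset hlen)) ?_
  have hstep : ∀ p q k, thetaMap P a b c p = P.getVert k →
      thetaMap P a b c q = P.getVert (k + 1) → k < P.length →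
      G.Adj (thetaMap P a b c p) (thetaMap P a b c q) :=
    fun p q k hp hq hk => hp ▸ hq ▸ P.adj_getVert_succ hk
  rintro e (he | ⟨i, hi₅, hi, rfl⟩) - <;> [skip; rw [Sym2.map_mk, mem_edgeSet]]
  · simp only [Set.mem_insert_iff, Set.mem_singleton_iff] at he
    rcases he with rfl | rfl | rfl | rfl | rfl | rfl | rfl | rfl <;>
      rw [Sym2.map_mk, mem_edgeSet]
    · simpa [thetaMap] using hua
    · simpa [thetaMap] using hva
    · simpa [thetaMap] using hub
    · simpa [thetaMap] using hvb
    · simpa [thetaMap] using huc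
    · simpa [thetaMap] using hvc
    · exact hstep 0 5 0 (by simp [thetaMap]) (thetaMap_of_five_le P a b c le_rfl) (by omega)
    · refine hstep _ _ (P.length - 1) (thetaMap_of_five_le P a b c (by omega)) ?_ (by omega)
      rw [Nat.sub_add_cancel (by omega)]
      simp [thetaMap]
  · exact hstep i (i + 1) (i - 4) (thetaMap_of_five_le P a b c hi₅)
      (by rw [thetaMap_of_five_le P a b c (by omega)]; congr 1; omega) (by omega)

end theta

theorem gammaG_support_subset {n k r : ℕ} (hn : 1 ≤ n) (hk : 1 ≤ k) :
    (gammaG n k r).support ⊆ Set.Iio (n + r + k - 1) := by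
  refine (support_fromEdgeSet_subset _).trans ?_
  rintro z ⟨e, he, hz⟩
  simp only [Set.mem_union, Set.mem_ofPred_eq] at he
  rcases he with (⟨i, hi, rfl⟩ | ⟨j, hj, rfl⟩) | ⟨i, hi, rfl⟩ <;> simp only [Sym2.mem_iff] at hz <;>
    simp only [Set.mem_Iio]
  · have := Nat.mod_lt (i + 1) (by omega : 0 < n); omega
  · split_ifs at hz <;> omega
  · have := Nat.mod_lt (i + 1) (by omega : 0 < k); split_ifs at hz <;> omega

section gamma

variable {x y : V} (C₁ : G.Walk x x) (P : G.Walk x y) (C₂ : G.Walk y y)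

def gammaMap : ℕ → V := fun m =>
  if m < C₁.length then C₁.getVert m
  else if m < C₁.length + P.length then P.getVert (m + 1 - C₁.length)
  else C₂.getVert (m + 1 - C₁.length - P.length)

theorem gammaMap_of_lt {m : ℕ} (hm : m < C₁.length) : gammaMap C₁ P C₂ m = C₁.getVert m :=
  if_pos hm

theorem gammaMap_of_le_of_lt {m : ℕ} (h₁ : C₁.length ≤ m) (h₂ : m < C₁.length + P.length) :
    gammaMap C₁ P C₂ m = P.getVert (m + 1 - C₁.length) := by
  simp only [gammaMap]
  rw [if_neg (by omega), if_pos h₂]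

theorem gammaMap_of_le {m : ℕ} (hm : C₁.length + P.length ≤ m) :
    gammaMap C₁ P C₂ m = C₂.getVert (m + 1 - C₁.length - P.length) := by
  simp only [gammaMap]
  rw [if_neg (by omega), if_neg (by omega)]

theorem gammaMap_path (hC₁ : 1 ≤ C₁.length) {j : ℕ} (hj : j ≤ P.length) :
    gammaMap C₁ P C₂ (if j = 0 then 0 else C₁.length - 1 + j) = P.getVert j := by
  split_ifs with h
  · rw [gammaMap_of_lt C₁ P C₂ (by omega), h, C₁.getVert_zero, P.getVert_zero]
  · rw [gammaMap_of_le_of_lt C₁ P C₂ (by omega) (by omega)]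
    congr 1
    omega

theorem gammaMap_cycle₂ (hC₁ : 1 ≤ C₁.length) {i : ℕ} :
    gammaMap C₁ P C₂ (if i = 0 then (if P.length = 0 then 0 else C₁.length - 1 + P.length)
      else C₁.length + P.length - 1 + i) = C₂.getVert i := by
  by_cases h : i = 0
  · rw [if_pos h, gammaMap_path C₁ P C₂ hC₁ le_rfl, h, C₂.getVert_zero, P.getVert_length]
  · rw [if_neg h, gammaMap_of_le C₁ P C₂ (by omega)]
    congr 1
    omega

variable {C₁ P C₂}

theorem gammaMap_injOn_Iio_add (hC₁ : C₁.IsCycle) (hP : P.IsPath)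
    (h₁P : ∀ z ∈ C₁.support, z ∈ P.support → z = x) :
    Set.InjOn (gammaMap C₁ P C₂) (Set.Iio (C₁.length + P.length)) := by
  have hsplit : Set.Iio (C₁.length + P.length) =
      Set.Iio C₁.length ∪ Set.Ico C₁.length (C₁.length + P.length) := by
    ext m; simp only [Set.mem_Iio, Set.mem_union, Set.mem_Ico]; omega
  rw [hsplit, Set.injOn_union (Set.disjoint_left.mpr fun m h₁ h₂ => by
    simp only [Set.mem_Iio, Set.mem_Ico] at h₁ h₂; omega)]
  refine ⟨fun m₁ h₁ m₂ h₂ h => ?_, fun m₁ h₁ m₂ h₂ h => ?_, fun m₁ h₁ m₂ h₂ h => ?_⟩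
  · simp only [Set.mem_Iio] at h₁ h₂
    rw [gammaMap_of_lt C₁ P C₂ h₁, gammaMap_of_lt C₁ P C₂ h₂] at h
    exact hC₁.getVert_injOn' (by simp only [Set.mem_ofPred_eq]; omega)
      (by simp only [Set.mem_ofPred_eq]; omega) h
  · simp only [Set.mem_Ico] at h₁ h₂
    rw [gammaMap_of_le_of_lt C₁ P C₂ h₁.1 h₁.2, gammaMap_of_le_of_lt C₁ P C₂ h₂.1 h₂.2] at h
    have := hP.getVert_injOn (by simp only [Set.mem_ofPred_eq]; omega)
      (by simp only [Set.mem_ofPred_eq]; omega) h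
    omega
  · simp only [Set.mem_Iio, Set.mem_Ico] at h₁ h₂
    rw [gammaMap_of_lt C₁ P C₂ h₁, gammaMap_of_le_of_lt C₁ P C₂ h₂.1 h₂.2] at h
    have := h₁P _ (C₁.getVert_mem_support m₁) (h ▸ P.getVert_mem_support _)
    rw [h, hP.getVert_eq_start_iff (by omega)] at this
    omega

theorem gammaMap_injOn (hC₁ : C₁.IsCycle) (hP : P.IsPath) (hC₂ : C₂.IsCycle)
    (h₁P : ∀ z ∈ C₁.support, z ∈ P.support → z = x)
    (h₂P : ∀ z ∈ C₂.support, z ∈ P.support → z = y)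
    (h₁₂ : ∀ z ∈ C₁.support, z ∈ C₂.support → z ∈ P.support) :
    Set.InjOn (gammaMap C₁ P C₂) (Set.Iio (C₁.length + P.length + C₂.length - 1)) := by
  set n := C₁.length
  set r := P.length
  set k := C₂.length
  have := hC₂.three_le_length
  have hsplit : Set.Iio (n + r + k - 1) = Set.Iio (n + r) ∪ Set.Ico (n + r) (n + r + k - 1) := by
    ext m; simp only [Set.mem_Iio, Set.mem_union, Set.mem_Ico]; omega
  rw [hsplit, Set.injOn_union (Set.disjoint_left.mpr fun m h₁ h₂ => by
    simp only [Set.mem_Iio, Set.mem_Ico] at h₁ h₂; omega)]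
  refine ⟨gammaMap_injOn_Iio_add hC₁ hP h₁P, fun m₁ h₁ m₂ h₂ h => ?_, fun m₁ h₁ m₂ h₂ h => ?_⟩
  · simp only [Set.mem_Ico] at h₁ h₂
    rw [gammaMap_of_le C₁ P C₂ h₁.1, gammaMap_of_le C₁ P C₂ h₂.1] at h
    have := hC₂.getVert_injOn (by simp only [Set.mem_ofPred_eq]; omega)
      (by simp only [Set.mem_ofPred_eq]; omega) h
    omega
  · simp only [Set.mem_Iio, Set.mem_Ico] at h₁ h₂
    rw [gammaMap_of_le C₁ P C₂ h₂.1] at h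
    have hC₂mem := h ▸ C₂.getVert_mem_support _
    have hy : gammaMap C₁ P C₂ m₁ = y := by
      by_cases h₁' : m₁ < n
      · rw [gammaMap_of_lt C₁ P C₂ h₁'] at hC₂mem ⊢
        exact h₂P _ hC₂mem (h₁₂ _ (C₁.getVert_mem_support _) hC₂mem)
      · rw [gammaMap_of_le_of_lt C₁ P C₂ (by omega) h₁] at hC₂mem ⊢
        exact h₂P _ hC₂mem (P.getVert_mem_support _)
    rw [h, hC₂.getVert_endpoint_iff (by omega)] at hy
    omega

theorem containsSub_gammaG (hC₁ : C₁.IsCycle) (hP : P.IsPath) (hC₂ : C₂.IsCycle)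
    (h₁P : ∀ z ∈ C₁.support, z ∈ P.support → z = x)
    (h₂P : ∀ z ∈ C₂.support, z ∈ P.support → z = y)
    (h₁₂ : ∀ z ∈ C₁.support, z ∈ C₂.support → z ∈ P.support) :
    ContainsSub G (gammaG C₁.length C₂.length P.length) := by
  have hn := hC₁.three_le_length
  have hk := hC₂.three_le_length
  refine containsSub_fromEdgeSet (f := gammaMap C₁ P C₂) ((gammaMap_injOn hC₁ hP hC₂ h₁P h₂P
    h₁₂).mono (gammaG_support_subset (by omega) (by omega))) ?_
  rintro e ((⟨i, hi, rfl⟩ | ⟨j, hj, rfl⟩) | ⟨i, hi, rfl⟩) - <;> rw [Sym2.map_mk, mem_edgeSet]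
  · rw [gammaMap_of_lt C₁ P C₂ hi, gammaMap_of_lt C₁ P C₂ (Nat.mod_lt _ (by omega)),
      C₁.getVert_succ_mod_length hi]
    exact C₁.adj_getVert_succ hi
  · rw [gammaMap_path C₁ P C₂ (by omega) hj.le, gammaMap_path C₁ P C₂ (by omega) hj]
    exact P.adj_getVert_succ hj
  · rw [gammaMap_cycle₂ C₁ P C₂ (by omega), gammaMap_cycle₂ C₁ P C₂ (by omega),
      C₂.getVert_succ_mod_length hi]
    exact C₂.adj_getVert_succ hi

end gamma

def EvenGammaFree (G : SimpleGraph V) : Prop :=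
  ∀ p q r : ℕ, 2 ≤ p → 2 ≤ q → ¬ ContainsSub G (gammaG (2 * p) (2 * q) r)

theorem EvenGammaFree.false_of_cycle_path_cycle (hG : G.EvenGammaFree) (c : G.Coloring Bool)
    {x y : V} {C₁ : G.Walk x x} {P : G.Walk x y} {C₂ : G.Walk y y}
    (hC₁ : C₁.IsCycle) (hP : P.IsPath) (hC₂ : C₂.IsCycle)
    (h₁P : ∀ z ∈ C₁.support, z ∈ P.support → z = x)
    (h₂P : ∀ z ∈ C₂.support, z ∈ P.support → z = y)
    (h₁₂ : ∀ z ∈ C₁.support, z ∈ C₂.support → z ∈ P.support) : False := by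
  obtain ⟨p, hp⟩ := c.even_length_of_loop C₁
  obtain ⟨q, hq⟩ := c.even_length_of_loop C₂
  have := hC₁.three_le_length
  have := hC₂.three_le_length
  refine hG p q P.length (by omega) (by omega) ?_
  have := containsSub_gammaG hC₁ hP hC₂ h₁P h₂P h₁₂
  rwa [hp, hq, ← two_mul, ← two_mul] at this

theorem exists_isCycle_support_eq_four {u v a b : V} (hua : G.Adj u a) (hva : G.Adj v a)
    (hub : G.Adj u b) (hvb : G.Adj v b) (huv : u ≠ v) (hab : a ≠ b) :
    ∃ D : G.Walk u u, D.IsCycle ∧ D.support = [u, a, v, b, u] := by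
  refine ⟨.cons hua (.cons hva.symm (.cons hvb (.cons hub.symm .nil))), ?_, rfl⟩
  rw [Walk.cons_isCycle_iff]
  simp [huv, huv.symm, hab, hua.ne', hva.ne', hub.ne', hvb.ne]

theorem EvenGammaFree.false_of_cycle_reaches_cycle (hG : G.EvenGammaFree) (c : G.Coloring Bool)
    {R : Set V} {z y : V} {C₁ : G.Walk z z} {C₂ : G.Walk y y} (hC₁ : C₁.IsCycle)
    (hC₂ : C₂.IsCycle) (hC₁R : ∀ v ∈ C₁.support, v ∈ R) (hC₂R : ∀ v ∈ C₂.support, v ∈ R → v = y)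
    (W : G.Walk z y) (hWR : ∀ v ∈ W.support, v ∈ R) : False := by
  classical
  obtain ⟨x, hx, P, hP, hPW, hPC⟩ := W.exists_isPath_support_tail_disjoint
    (Z := {v | v ∈ C₁.support}) ⟨z, W.start_mem_support, C₁.start_mem_support⟩
  have hrot : ∀ v, v ∈ (C₁.rotate x hx).support → v ∈ C₁.support :=
    fun v => (C₁.mem_support_rotate_iff x hx).mp
  refine hG.false_of_cycle_path_cycle c (hC₁.rotate hx) hP hC₂ (fun v hv₁ hvP => ?_)
    (fun v hv₂ hvP => hC₂R v hv₂ (hWR v (hPW v hvP))) (fun v hv₁ hv₂ => ?_)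
  · rw [← P.cons_tail_support, List.mem_cons] at hvP
    exact hvP.resolve_right fun h => hPC v h (hrot v hv₁)
  · rw [hC₂R v hv₂ (hC₁R v (hrot v hv₁))]
    exact P.end_mem_support

/-- Trimmed to a path `q` between common neighbours with none inside, `p` closes the cycle
`u q u`, which meets the 4-cycle through `u`, `v` and two common neighbours off `q` only in `u`. -/
theorem EvenGammaFree.eq_of_walk_of_commonNeighbors (hG : G.EvenGammaFree) (c : G.Coloring Bool)
    {u v : V} {x : Fin 4 → V} (hx : Function.Injective x) (hux : ∀ i, G.Adj u (x i))
    (hvx : ∀ i, G.Adj v (x i)) (huv : u ≠ v) {a b : V} (hua : G.Adj u a) (hva : G.Adj v a)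
    (hub : G.Adj u b) (hvb : G.Adj v b) (p : G.Walk a b) (hpu : u ∉ p.support)
    (hpv : v ∉ p.support) : a = b := by
  classical
  by_contra hab
  obtain ⟨a', ⟨hua', -, ha'b⟩, q, hq, hqp, hqZ⟩ :=
    p.exists_isPath_support_tail_disjoint (Z := {y | G.Adj u y ∧ G.Adj v y ∧ y ≠ b})
      ⟨a, p.start_mem_support, hua, hva, hab⟩
  have hqu : u ∉ q.support := fun h => hpu (hqp u h)
  have hqv : v ∉ q.support := fun h => hpv (hqp v h)
  have hxq : ∀ i, x i ∈ q.support → x i ∈ ({a', b} : Finset V) := fun i hi => by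
    rw [← q.cons_tail_support, List.mem_cons] at hi
    rcases hi with h | h
    · simp [h]
    · by_contra hne
      exact hqZ _ h ⟨hux i, hvx i, by simp_all⟩
  obtain ⟨i, j, hij, hi, hj⟩ := Finset.exists_ne_not_of_card_filter_add_two_le
    (fun i => x i ∈ q.support) <| by
      have := Finset.card_le_card_of_injOn (s := Finset.univ.filter fun i => x i ∈ q.support) x
        (fun i hi => hxq i (Finset.mem_filter.mp hi).2) hx.injOn
      have := Finset.card_le_two (a := a') (b := b)
      simp only [Fintype.card_fin]
      omega
  obtain ⟨D, hD, hDs⟩ := exists_isCycle_support_eq_four (hux i) (hvx i) (hux j) (hvx j) huv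
    (hx.ne hij)
  set C := Walk.cons hua' (q.concat hub.symm)
  have hC : C.IsCycle := by
    rw [Walk.cons_isCycle_iff]
    refine ⟨hq.concat hqu _, fun he => ?_⟩
    rw [Walk.edges_concat, List.concat_eq_append, List.mem_append, List.mem_singleton] at he
    rcases he with he | he
    · exact hqu (q.fst_mem_support_of_mem_edges he)
    · simp [hub.ne, ha'b] at he
  refine hG.false_of_cycle_reaches_cycle c (R := {y | y ∈ C.support}) hC hD (fun _ => id)
    (fun y hyD hyC => ?_) .nil (by simp)
  simp only [C, hDs, Walk.support_cons, Walk.support_concat, List.mem_cons, List.mem_append,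
    List.not_mem_nil, or_false, Set.mem_ofPred_eq] at hyD hyC
  rcases hyD with rfl | rfl | rfl | rfl | rfl <;> simp_all [(hux i).ne', (hux j).ne']

/-- For `w ∉ A`, the vertex set of the connected component of `w` in `G - A`. -/
def reachableAvoiding (G : SimpleGraph V) (A : Set V) (w : V) : Set V :=
  {z | ∃ p : G.Walk w z, ∀ y ∈ p.support, y ∉ A}

section reachableAvoiding

variable {A : Set V} {w : V}

theorem mem_reachableAvoiding_self (hw : w ∉ A) : w ∈ G.reachableAvoiding A w :=
  ⟨.nil, by simpa using hw⟩

theorem notMem_of_mem_reachableAvoiding {z : V} (hz : z ∈ G.reachableAvoiding A w) : z ∉ A :=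
  hz.elim fun p hp => hp z p.end_mem_support

theorem mem_reachableAvoiding_of_mem_support {z y : V} {p : G.Walk w z}
    (hp : ∀ y ∈ p.support, y ∉ A) (hy : y ∈ p.support) : y ∈ G.reachableAvoiding A w := by
  classical
  exact ⟨p.takeUntil y hy, fun y' hy' => hp y' (p.support_takeUntil_subset_support hy hy')⟩

theorem mem_reachableAvoiding_of_adj {z y : V} (hz : z ∈ G.reachableAvoiding A w)
    (h : G.Adj z y) (hy : y ∉ A) : y ∈ G.reachableAvoiding A w := by
  obtain ⟨p, hp⟩ := hz
  refine ⟨p.concat h, fun y' hy' => ?_⟩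
  rw [Walk.support_concat, List.mem_append, List.mem_singleton] at hy'
  exact hy'.elim (hp y') (· ▸ hy)

theorem exists_isPath_of_mem_reachableAvoiding {z₁ z₂ : V}
    (hz₁ : z₁ ∈ G.reachableAvoiding A w) (hz₂ : z₂ ∈ G.reachableAvoiding A w) :
    ∃ p : G.Walk z₁ z₂, p.IsPath ∧ ∀ y ∈ p.support, y ∈ G.reachableAvoiding A w := by
  classical
  obtain ⟨p₁, hp₁⟩ := hz₁
  obtain ⟨p₂, hp₂⟩ := hz₂
  refine ⟨(p₁.reverse.append p₂).bypass, Walk.bypass_isPath _, fun y hy => ?_⟩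
  rcases (Walk.mem_support_append_iff _ _).mp (Walk.support_bypass_subset_support _ hy) with h | h
  · exact mem_reachableAvoiding_of_mem_support hp₁ (by simpa using h)
  · exact mem_reachableAvoiding_of_mem_support hp₂ h

theorem Connected.exists_adj_of_reachableAvoiding (hG : G.Connected) {a : V} (hw : w ∉ A)
    (ha : a ∈ A) : ∃ z ∈ G.reachableAvoiding A w, ∃ y ∈ A, G.Adj z y := by
  obtain ⟨p⟩ := hG.preconnected w a
  obtain ⟨d, -, hd₁, hd₂⟩ := p.exists_boundary_dart _ (mem_reachableAvoiding_self hw)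
    fun h => notMem_of_mem_reachableAvoiding h ha
  refine ⟨d.fst, hd₁, d.snd, ?_, d.adj⟩
  by_contra h
  exact hd₂ (mem_reachableAvoiding_of_adj hd₁ d.adj h)

end reachableAvoiding

theorem EvenGammaFree.exists_three_notMem_reachableAvoiding (hG : G.EvenGammaFree)
    (c : G.Coloring Bool) {u v : V} {x : Fin 4 → V} (hx : Function.Injective x)
    (hux : ∀ i, G.Adj u (x i)) (hvx : ∀ i, G.Adj v (x i)) (huv : u ≠ v) (w : V) :
    ∃ i j k, i ≠ j ∧ i ≠ k ∧ j ≠ k ∧ x i ∉ G.reachableAvoiding {u, v} w ∧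
      x j ∉ G.reachableAvoiding {u, v} w ∧ x k ∉ G.reachableAvoiding {u, v} w := by
  classical
  have hT : ∀ i j, x i ∈ G.reachableAvoiding {u, v} w → x j ∈ G.reachableAvoiding {u, v} w →
      i = j := fun i j hi hj => by
    obtain ⟨p, -, hp⟩ := exists_isPath_of_mem_reachableAvoiding hi hj
    exact hx (hG.eq_of_walk_of_commonNeighbors c hx hux hvx huv (hux i) (hvx i) (hux j) (hvx j)
      p (fun h => notMem_of_mem_reachableAvoiding (hp u h) (by simp))
      (fun h => notMem_of_mem_reachableAvoiding (hp v h) (by simp)))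
  refine Finset.exists_ne_ne_not_of_card_filter_add_three_le _ ?_
  have := (Finset.card_le_one (s := Finset.univ.filter
    fun i => x i ∈ G.reachableAvoiding {u, v} w)).mpr fun i hi j hj =>
      hT i j (Finset.mem_filter.mp hi).2 (Finset.mem_filter.mp hj).2
  simp only [Fintype.card_fin]
  omega

theorem nonempty_iso_completeBipartiteGraph {A : Set V}
    (h : ∀ a b, G.Adj a b ↔ (a ∈ A ↔ b ∉ A)) :
    Nonempty (G ≃g completeBipartiteGraph A (Aᶜ : Set V)) := by
  classical
  refine ⟨⟨(Equiv.Set.sumCompl A).symm, fun {a b} => ?_⟩⟩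
  by_cases ha : a ∈ A <;> by_cases hb : b ∈ A <;>
    simp [Equiv.Set.sumCompl_symm_apply_of_mem, Equiv.Set.sumCompl_symm_apply_of_notMem, ha, hb, h]

theorem exists_not_commonNeighbor [Fintype V] (c : G.Coloring Bool)
    (hK : ∀ m : ℕ, 1 ≤ m → IsEmpty (G ≃g completeBipartiteGraph (Fin 2) (Fin m)))
    {u v x : V} (huv : u ≠ v) (hux : G.Adj u x) (hvx : G.Adj v x) :
    ∃ w, w ≠ u ∧ w ≠ v ∧ ¬ (G.Adj u w ∧ G.Adj v w) := by
  classical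
  by_contra! h
  have hadj : ∀ a b, G.Adj a b ↔ (a ∈ ({u, v} : Set V) ↔ b ∉ ({u, v} : Set V)) := by
    intro a b
    have hcuv := c.eq_of_adj_of_adj hux hvx
    simp only [Set.mem_insert_iff, Set.mem_singleton_iff]
    by_cases ha : a = u ∨ a = v <;> by_cases hb : b = u ∨ b = v <;>
      simp only [ha, hb, not_true, not_false_iff, iff_true, iff_false]
    · intro hab
      have := c.valid hab
      rcases ha with rfl | rfl <;> rcases hb with rfl | rfl <;> simp_all
    · push Not at hb
      rcases ha with rfl | rfl
      exacts [(h b hb.1 hb.2).1, (h b hb.1 hb.2).2]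
    · push Not at ha
      rcases hb with rfl | rfl
      exacts [(h a ha.1 ha.2).1.symm, (h a ha.1 ha.2).2.symm]
    · push Not at ha hb
      exact fun hab => c.valid hab
        (c.eq_of_adj_of_adj (h a ha.1 ha.2).1.symm (h b hb.1 hb.2).1.symm)
  obtain ⟨e⟩ := nonempty_iso_completeBipartiteGraph hadj
  have h2 : Fintype.card ({u, v} : Set V) = 2 := by simp [huv]
  have hm : 1 ≤ Fintype.card (({u, v} : Set V)ᶜ : Set V) :=
    Fintype.card_pos_iff.mpr ⟨⟨x, by simp [hux.ne', hvx.ne']⟩⟩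
  exact (hK _ hm).false (e.trans (completeBipartiteGraphCongr (Fintype.equivFinOfCardEq h2)
    (Fintype.equivFin _)))

theorem exists_theta4_of_isPath (c : G.Coloring Bool) {u v a b d t₁ t₂ : V}
    (P : G.Walk t₁ t₂) (hP : P.IsPath) (ht : t₁ ≠ t₂) (hut₁ : G.Adj u t₁) (hvt₂ : G.Adj v t₂)
    (hu : u ∉ P.support) (hv : v ∉ P.support) (huv : u ≠ v) (hab : a ≠ b) (had : a ≠ d)
    (hbd : b ≠ d) (hua : G.Adj u a) (hva : G.Adj v a) (hub : G.Adj u b) (hvb : G.Adj v b)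
    (hud : G.Adj u d) (hvd : G.Adj v d) (ha : a ∉ P.support) (hb : b ∉ P.support)
    (hd : d ∉ P.support) : ∃ m : ℕ, 2 ≤ m ∧ ContainsSub G (theta4 (2 * m)) := by
  set Q : G.Walk u v := .cons hut₁ (P.concat hvt₂.symm)
  have hQ : Q.IsPath := (hP.concat hv _).cons (by simp [hu, huv])
  have hQs : ∀ y, y ∈ Q.support ↔ y = u ∨ y ∈ P.support ∨ y = v := fun y => by
    simp [Q, Walk.support_concat]
  obtain ⟨m, hm⟩ := (c.even_length_iff_congr Q).mpr (by rw [c.eq_of_adj_of_adj hua hva])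
  have hP₁ : 1 ≤ P.length := Nat.one_le_iff_ne_zero.mpr fun h =>
    ht ((hP.nil_iff_eq).mp (Walk.length_eq_zero_iff.mp h))
  have hQlen : Q.length = P.length + 2 := by simp [Q]
  refine ⟨m, by omega, ?_⟩
  rw [← two_mul] at hm
  rw [← hm]
  refine containsSub_theta4 hQ (by omega) hab had hbd hua hva hub hvb hud hvd ?_ ?_ ?_ <;>
    simp only [hQs, not_or]
  exacts [⟨hua.ne', ha, hva.ne'⟩, ⟨hub.ne', hb, hvb.ne'⟩, ⟨hud.ne', hd, hvd.ne'⟩]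

theorem EvenGammaFree.false_of_closed_set [Fintype V] [DecidableRel G.Adj]
    (hG : G.EvenGammaFree) (c : G.Coloring Bool) (hdeg : ∀ v, 2 ≤ G.degree v) {y₀ y₁ a b : V}
    (hy₀a : G.Adj y₀ a) (hy₁a : G.Adj y₁ a) (hy₀b : G.Adj y₀ b) (hy₁b : G.Adj y₁ b)
    (hy : y₀ ≠ y₁) (hab : a ≠ b) {T : Set V}
    (hT : ∀ z₁ ∈ T, ∀ z₂ ∈ T, ∃ p : G.Walk z₁ z₂, ∀ y ∈ p.support, y ∈ T)
    (hy₁T : y₁ ∉ T) (haT : a ∉ T) (hbT : b ∉ T) {td : V} (htd : td ∈ T) (hy₀td : G.Adj y₀ td)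
    {S : Set V} (hST : S ⊆ insert y₀ T) {e t : V} (he : e ∈ S) (ht : t ∈ S) (hte : t ≠ e)
    (hS : ∀ v ∈ S, v ≠ e → G.neighborSet v ⊆ S) : False := by
  obtain ⟨z, C, hC, hCS⟩ := exists_isCycle_support_subset he ht hte hS fun v _ _ => hdeg v
  obtain ⟨D, hD, hDs⟩ := exists_isCycle_support_eq_four hy₀a hy₁a hy₀b hy₁b hy hab
  obtain ⟨W, hW⟩ : ∃ W : G.Walk z y₀, ∀ v ∈ W.support, v ∈ insert y₀ T := by
    rcases hST (hCS z C.start_mem_support) with rfl | hz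
    · exact ⟨.nil, by simp⟩
    · obtain ⟨p, hp⟩ := hT z hz td htd
      refine ⟨p.concat hy₀td.symm, fun v hv => ?_⟩
      rw [Walk.support_concat, List.mem_append, List.mem_singleton] at hv
      exact hv.elim (fun hv => Set.mem_insert_of_mem _ (hp v hv)) (· ▸ Set.mem_insert _ _)
  refine hG.false_of_cycle_reaches_cycle c hC hD (fun v hv => hST (hCS v hv))
    (fun v hvD hvR => ?_) W hW
  simp only [hDs, List.mem_cons, List.not_mem_nil, or_false] at hvD
  rcases hvD with rfl | rfl | rfl | rfl | rfl
  all_goals first | rfl | (exfalso; rcases hvR with h | h)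
  exacts [hy₀a.ne h.symm, haT h, hy h.symm, hy₁T h, hy₀b.ne h.symm, hbT h]

theorem EvenGammaFree.false_of_adj_reachableAvoiding [Fintype V] [DecidableRel G.Adj]
    (hG : G.EvenGammaFree) (c : G.Coloring Bool) (hdeg : ∀ v, 2 ≤ G.degree v) {y₀ y₁ a b w td : V}
    (hy₀a : G.Adj y₀ a) (hy₁a : G.Adj y₁ a) (hy₀b : G.Adj y₀ b) (hy₁b : G.Adj y₁ b)
    (hy : y₀ ≠ y₁) (hab : a ≠ b) (haT : a ∉ G.reachableAvoiding {y₀, y₁} w)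
    (hbT : b ∉ G.reachableAvoiding {y₀, y₁} w) (hwy₀ : w ≠ y₀) (hwy₁ : w ≠ y₁)
    (hw : ¬ (G.Adj y₀ w ∧ G.Adj y₁ w)) (htd : td ∈ G.reachableAvoiding {y₀, y₁} w)
    (hy₀td : G.Adj y₀ td)
    (hex : ∀ t₁ ∈ G.reachableAvoiding {y₀, y₁} w, ∀ t₂ ∈ G.reachableAvoiding {y₀, y₁} w,
      G.Adj y₀ t₁ → G.Adj y₁ t₂ → t₁ = t₂) : False := by
  set T := G.reachableAvoiding {y₀, y₁} w
  have hwT : w ∈ T := mem_reachableAvoiding_self (by simp [hwy₀, hwy₁])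
  have hT : ∀ z₁ ∈ T, ∀ z₂ ∈ T, ∃ p : G.Walk z₁ z₂, ∀ y ∈ p.support, y ∈ T :=
    fun z₁ h₁ z₂ h₂ => (exists_isPath_of_mem_reachableAvoiding h₁ h₂).imp fun _ h => h.2
  have hy₁T : y₁ ∉ T := fun h => notMem_of_mem_reachableAvoiding h (by simp)
  have hnbr : ∀ z ∈ T, ∀ y, G.Adj z y → y ≠ y₀ → y ≠ y₁ → y ∈ T := fun z hz y h h₀ h₁ =>
    mem_reachableAvoiding_of_adj hz h (by simp [h₀, h₁])
  by_cases h₁ : ∃ t ∈ T, G.Adj y₁ t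
  · obtain ⟨tb, htb, hy₁tb⟩ := h₁
    obtain rfl := hex td htd tb htb hy₀td hy₁tb
    refine hG.false_of_closed_set c hdeg hy₀a hy₁a hy₀b hy₁b hy hab hT hy₁T haT hbT htd hy₀td
      (Set.subset_insert _ _) htd hwT (fun h => hw (h ▸ ⟨hy₀td, hy₁tb⟩))
      (fun z hz hne y hzy => hnbr z hz y hzy ?_ ?_)
    · rintro rfl; exact hne (hex z hz td htd hzy.symm hy₁tb)
    · rintro rfl; exact hne (hex td htd z hz hy₀td hzy.symm).symm
  · refine hG.false_of_closed_set c hdeg hy₀a hy₁a hy₀b hy₁b hy hab hT hy₁T haT hbT htd hy₀td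
      subset_rfl (Set.mem_insert _ _) (Set.mem_insert_of_mem _ hwT) hwy₀
      (fun z hz hne y hzy => ?_)
    have hz : z ∈ T := hz.resolve_left hne
    by_cases hyy₀ : y = y₀
    · exact hyy₀ ▸ Set.mem_insert _ _
    · exact Set.mem_insert_of_mem _ (hnbr z hz y hzy hyy₀ fun h => h₁ ⟨z, hz, h ▸ hzy.symm⟩)

theorem EvenGammaFree.exists_adj_adj_of_reachableAvoiding [Fintype V] [DecidableRel G.Adj]
    (hG : G.EvenGammaFree) (c : G.Coloring Bool) (hconn : G.Connected)
    (hdeg : ∀ v, 2 ≤ G.degree v) {u v a b w : V} (hua : G.Adj u a) (hva : G.Adj v a)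
    (hub : G.Adj u b) (hvb : G.Adj v b) (huv : u ≠ v) (hab : a ≠ b)
    (haT : a ∉ G.reachableAvoiding {u, v} w) (hbT : b ∉ G.reachableAvoiding {u, v} w)
    (hwu : w ≠ u) (hwv : w ≠ v) (hw : ¬ (G.Adj u w ∧ G.Adj v w)) :
    ∃ t₁ ∈ G.reachableAvoiding {u, v} w, ∃ t₂ ∈ G.reachableAvoiding {u, v} w,
      t₁ ≠ t₂ ∧ G.Adj u t₁ ∧ G.Adj v t₂ := by
  by_contra! hex
  obtain ⟨td, htd, y₀, hy₀, hadj⟩ :=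
    hconn.exists_adj_of_reachableAvoiding (w := w) (by simp [hwu, hwv]) (Set.mem_insert u {v})
  rcases hy₀ with rfl | rfl
  · exact hG.false_of_adj_reachableAvoiding c hdeg hua hva hub hvb huv hab haT hbT hwu hwv hw htd
      hadj.symm fun t₁ h₁ t₂ h₂ h₁' h₂' => by_contra fun h => hex t₁ h₁ t₂ h₂ h h₁' h₂'
  · rw [Set.pair_comm] at haT hbT htd hex
    exact hG.false_of_adj_reachableAvoiding c hdeg hva hua hvb hub huv.symm hab haT hbT hwv hwu
      (fun h => hw h.symm) htd hadj.symm
      fun t₁ h₁ t₂ h₂ h₁' h₂' => by_contra fun h => hex t₂ h₂ t₁ h₁ (Ne.symm h) h₂' h₁'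

theorem ContainsSub.exists_of_completeBipartiteGraph_two {n : ℕ} (hn : 1 ≤ n)
    (h : ContainsSub G (completeBipartiteGraph (Fin 2) (Fin n))) :
    ∃ (u v : V) (x : Fin n → V), u ≠ v ∧ Function.Injective x ∧
      (∀ i, G.Adj u (x i)) ∧ ∀ i, G.Adj v (x i) := by
  obtain ⟨f, hf, hadj⟩ := h
  have hsupp : ∀ z, z ∈ (completeBipartiteGraph (Fin 2) (Fin n)).support := by
    rintro (i | j)
    exacts [⟨.inr ⟨0, hn⟩, by simp⟩, ⟨.inl 0, by simp⟩]
  exact ⟨f (.inl 0), f (.inl 1), fun i => f (.inr i),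
    fun h => by simpa using hf (hsupp _) (hsupp _) h,
    fun i j h => by simpa using hf (hsupp _) (hsupp _) h,
    fun i => hadj _ _ (by simp), fun i => hadj _ _ (by simp)⟩

end SimpleGraph

/-- If `H` is a connected bipartite graph with minimum degree at least 2 which is not
isomorphic to any `K_{2,m}` (`m ≥ 1`), contains `K_{2,4} = θ_{2,2,2,2}` as a subgraph
and contains no `Γ_{2p,2q,r}` (`p,q ≥ 2`, `r ≥ 0`) as a partial induced subgraph,
then `H` contains `θ_{2,2,2,2m}` for some `m ≥ 2` as a partial induced subgraph. -/
theorem contains_theta4 {V : Type*} [Fintype V] (H : SimpleGraph V)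
    [DecidableRel H.Adj]
    (hconn : H.Connected)
    (hbip : ∃ s : Set V, ∀ u w : V, H.Adj u w → (u ∈ s ↔ w ∉ s))
    (hmin : ∀ v : V, 2 ≤ H.degree v)
    (hK2m : ∀ m : ℕ, 1 ≤ m → IsEmpty (H ≃g completeBipartiteGraph (Fin 2) (Fin m)))
    (hK24 : ContainsSub H (completeBipartiteGraph (Fin 2) (Fin 4)))
    (hGamma : ∀ p q r : ℕ, 2 ≤ p → 2 ≤ q → ¬ ContainsSub H (gammaG (2 * p) (2 * q) r)) :
    ∃ m : ℕ, 2 ≤ m ∧ ContainsSub H (theta4 (2 * m)) := by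
  classical
  have hG : H.EvenGammaFree := hGamma
  obtain ⟨s, hs⟩ := hbip
  let c : H.Coloring Bool := Coloring.mk (fun z => decide (z ∈ s)) fun {a b} h => by
    have := hs a b h
    simp only [ne_eq, decide_eq_decide]
    tauto
  obtain ⟨u, v, x, huv, hx, hux, hvx⟩ := hK24.exists_of_completeBipartiteGraph_two (by norm_num)
  obtain ⟨w, hwu, hwv, hw⟩ := exists_not_commonNeighbor c hK2m huv (hux 0) (hvx 0)
  obtain ⟨i, j, k, hij, hik, hjk, hi, hj, hk⟩ :=
    hG.exists_three_notMem_reachableAvoiding c hx hux hvx huv w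
  obtain ⟨t₁, ht₁, t₂, ht₂, ht, hut₁, hvt₂⟩ := hG.exists_adj_adj_of_reachableAvoiding c hconn
    hmin (hux i) (hvx i) (hux j) (hvx j) huv (hx.ne hij) hi hj hwu hwv hw
  obtain ⟨P, hP, hPT⟩ := exists_isPath_of_mem_reachableAvoiding ht₁ ht₂
  have hPuv : u ∉ P.support ∧ v ∉ P.support := by
    constructor <;> exact fun h => notMem_of_mem_reachableAvoiding (hPT _ h) (by simp)
  exact exists_theta4_of_isPath c P hP ht hut₁ hvt₂ hPuv.1 hPuv.2 huv (hx.ne hij) (hx.ne hik)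
    (hx.ne hjk) (hux i) (hvx i) (hux j) (hvx j) (hux k) (hvx k) (hi <| hPT _ ·) (hj <| hPT _ ·)
    (hk <| hPT _ ·)
end

section
/- Let G be a bipartite graph and f : V(G) → {2,3} a function such that at most 5 vertices v satisfy f(v) = 2. Then G is [f,3]-choosable. -/
open SimpleGraph

lemma third_color {α β : ℕ} (hα : α ∈ Finset.Icc 1 3) (hβ : β ∈ Finset.Icc 1 3)
    (hne : α ≠ β) :
    6 - α - β ∈ Finset.Icc 1 3 \ {α} ∧ 6 - α - β ∈ Finset.Icc 1 3 \ {β} := by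
  simp only [Finset.mem_Icc] at hα hβ
  obtain ⟨h1, h2⟩ := hα; obtain ⟨h3, h4⟩ := hβ
  interval_cases α <;> interval_cases β <;> simp_all <;> decide

lemma comp_card {x : ℕ} (hx : x ∈ Finset.Icc 1 3) :
    (Finset.Icc 1 3 \ ({x} : Finset ℕ)).card = 2 := by
  simp only [Finset.mem_Icc] at hx
  obtain ⟨h1, h2⟩ := hx
  interval_cases x <;> decide

/-- Every bipartite graph with list sizes in `{2,3}` and at most 5 vertices with
2-lists is `[f,3]`-choosable. -/
theorem bipartite_few_two_lists_choosable {V : Type*} [Fintype V]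
    (G : SimpleGraph V)
    (hbip : ∃ s : Set V, ∀ u v : V, G.Adj u v → (u ∈ s ↔ v ∉ s))
    (f : V → ℕ) (hf : ∀ v, f v = 2 ∨ f v = 3)
    (hfew : (Finset.univ.filter (fun v => f v = 2)).card ≤ 5) :
    ChoosableF G f 3 := by
  classical
  intro L hL hcard
  obtain ⟨s, hs⟩ := hbip
  -- a vertex with a 3-list has the full palette
  have L3 : ∀ v, f v = 3 → L v = Finset.Icc 1 3 := by
    intro v h
    exact Finset.eq_of_subset_of_card_le (hL v) (by rw [hcard v, h]; decide)
  -- a vertex missing color x (x in palette) has list exactly Icc 1 3 \ {x}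
  have L2 : ∀ x ∈ Finset.Icc 1 3, ∀ v, x ∉ L v →
      f v = 2 ∧ L v = Finset.Icc 1 3 \ {x} := by
    intro x hx v hxv
    have hf2 : f v = 2 := by
      rcases hf v with h | h
      · exact h
      · exact absurd (L3 v h ▸ hx) hxv
    refine ⟨hf2, Finset.eq_of_subset_of_card_le ?_ ?_⟩
    · intro y hy
      simp only [Finset.mem_sdiff, Finset.mem_singleton]
      exact ⟨hL v hy, fun h => hxv (h ▸ hy)⟩
    · rw [hcard v, hf2, comp_card hx]
  -- the two-lists appearing on each side
  set A' : Finset (Finset ℕ) :=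
    (Finset.univ.filter (fun v => v ∈ s ∧ f v = 2)).image L with hA'
  set B' : Finset (Finset ℕ) :=
    (Finset.univ.filter (fun v => v ∉ s ∧ f v = 2)).image L with hB'
  have hsum : A'.card + B'.card ≤ 5 := by
    have h1 : A'.card ≤ (Finset.univ.filter (fun v => v ∈ s ∧ f v = 2)).card :=
      Finset.card_image_le
    have h2 : B'.card ≤ (Finset.univ.filter (fun v => v ∉ s ∧ f v = 2)).card :=
      Finset.card_image_le
    have e1 : Finset.univ.filter (fun v => v ∈ s ∧ f v = 2)
        = (Finset.univ.filter (fun v => f v = 2)).filter (fun v => v ∈ s) := by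
      ext v; simp; tauto
    have e2 : Finset.univ.filter (fun v => v ∉ s ∧ f v = 2)
        = (Finset.univ.filter (fun v => f v = 2)).filter (fun v => v ∉ s) := by
      ext v; simp; tauto
    have e3 := Finset.card_filter_add_card_filter_not
      (s := Finset.univ.filter (fun v => f v = 2)) (p := fun v => v ∈ s)
    rw [e1] at h1; rw [e2] at h2
    omega
  -- choose good α β
  have hex : ∃ α ∈ Finset.Icc 1 3, ∃ β ∈ Finset.Icc 1 3, α ≠ β ∧
      ¬(Finset.Icc 1 3 \ {α} ∈ A' ∧ Finset.Icc 1 3 \ {β} ∈ B') := by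
    by_contra h
    push_neg at h
    have hA : ({Finset.Icc 1 3 \ {1}, Finset.Icc 1 3 \ {2}, Finset.Icc 1 3 \ {3}} :
        Finset (Finset ℕ)) ⊆ A' := by
      intro x hx
      simp only [Finset.mem_insert, Finset.mem_singleton] at hx
      rcases hx with rfl | rfl | rfl
      · exact (h 1 (by decide) 2 (by decide) (by decide)).1
      · exact (h 2 (by decide) 1 (by decide) (by decide)).1
      · exact (h 3 (by decide) 1 (by decide) (by decide)).1
    have hB : ({Finset.Icc 1 3 \ {1}, Finset.Icc 1 3 \ {2}, Finset.Icc 1 3 \ {3}} :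
        Finset (Finset ℕ)) ⊆ B' := by
      intro x hx
      simp only [Finset.mem_insert, Finset.mem_singleton] at hx
      rcases hx with rfl | rfl | rfl
      · exact (h 2 (by decide) 1 (by decide) (by decide)).2
      · exact (h 1 (by decide) 2 (by decide) (by decide)).2
      · exact (h 1 (by decide) 3 (by decide) (by decide)).2
    have h3 : ({Finset.Icc 1 3 \ {1}, Finset.Icc 1 3 \ {2}, Finset.Icc 1 3 \ {3}} :
        Finset (Finset ℕ)).card = 3 := by decide
    have := Finset.card_le_card hA
    have := Finset.card_le_card hB
    omega
  obtain ⟨α, hα, β, hβ, hαβ, hbad⟩ := hex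
  obtain ⟨hγα, hγβ⟩ := third_color hα hβ hαβ
  set γ := 6 - α - β with hγ
  have hγα' : γ ≠ α := by
    simp only [Finset.mem_sdiff, Finset.mem_singleton] at hγα; exact hγα.2
  have hγβ' : γ ≠ β := by
    simp only [Finset.mem_sdiff, Finset.mem_singleton] at hγβ; exact hγβ.2
  -- the coloring
  refine ⟨fun v => if v ∈ s then (if α ∈ L v then α else γ)
      else (if β ∈ L v then β else γ), ?_, ?_⟩
  · intro v
    by_cases hv : v ∈ s <;> simp only [hv, if_true, if_false]
    · by_cases h1 : α ∈ L v
      · simpa [h1]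
      · simp only [h1, if_false]
        rw [(L2 α hα v h1).2]; exact hγα
    · by_cases h1 : β ∈ L v
      · simpa [h1]
      · simp only [h1, if_false]
        rw [(L2 β hβ v h1).2]; exact hγβ
  · intro u v hadj
    have hsv := hs u v hadj
    -- helper memberships
    have memA : ∀ w, w ∈ s → α ∉ L w → Finset.Icc 1 3 \ {α} ∈ A' := by
      intro w hw hαw
      obtain ⟨hf2, hLw⟩ := L2 α hα w hαw
      rw [hA', ← hLw]
      exact Finset.mem_image_of_mem L (Finset.mem_filter.mpr ⟨Finset.mem_univ _, hw, hf2⟩)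
    have memB : ∀ w, w ∉ s → β ∉ L w → Finset.Icc 1 3 \ {β} ∈ B' := by
      intro w hw hβw
      obtain ⟨hf2, hLw⟩ := L2 β hβ w hβw
      rw [hB', ← hLw]
      exact Finset.mem_image_of_mem L (Finset.mem_filter.mpr ⟨Finset.mem_univ _, hw, hf2⟩)
    by_cases hu : u ∈ s
    · have hv : v ∉ s := hsv.mp hu
      simp only [hu, hv, if_true, if_false]
      by_cases h1 : α ∈ L u <;> by_cases h2 : β ∈ L v <;>
        simp only [h1, h2, if_true, if_false]
      · exact hαβ
      · exact fun h => hγα' h.symm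
      · exact fun h => hγβ' h
      · exact fun _ => hbad ⟨memA u hu h1, memB v hv h2⟩
    · have hv : v ∈ s := by
        by_contra hv; exact hu (hsv.mpr hv)
      simp only [hu, hv, if_true, if_false]
      by_cases h1 : β ∈ L u <;> by_cases h2 : α ∈ L v <;>
        simp only [h1, h2, if_true, if_false]
      · exact fun h => hαβ h.symm
      · exact fun h => hγβ' h.symm
      · exact fun h => hγα' h
      · exact fun _ => hbad ⟨memA v hv h2, memB u hu h1⟩
end

section
/- Let H=(V_H,E_H) be a graph, S_H ⊆ V_H a stable set of H, and f_H : V_H → ℕ, with k ≥ max( max_{v∈V_H} f_H(v), max_{v∈S_H} (f_H(v)+1) ). Assume: (1) H is ([f_H,k],S_H)-critical; (2) every list assignment L_H with colors in {1,…,k} such that |L_H(v)| = f_H(v) for all v ∈ V_H∖S_H and L_H(v) = {c} for all v ∈ S_H (the same single color c for all of S_H) is feasible. Let G=(V,E) be a graph disjoint from H, f : V → ℕ with max_{v∈V} f(v) ≤ k, and v₀ ∈ V with f(v₀) ≤ k−1. Let G' be the graph on V_H ∪ V obtained from the disjoint union of H and G by joining every vertex of S_H to v₀, and define f' by f'(v)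 = f_H(v)+1 for v ∈ S_H, f'(v₀) = f(v₀)+1, f'(v) = f_H(v) for v ∈ V_H∖S_H, and f'(v) = f(v) for v ∈ V∖{v₀}. Then G' is [f',k]-choosable if and only if G is [f,k]-choosable. -/
open SimpleGraph

/-- `H` is `([f,k],S)`-critical: there is an infeasible `f`-list assignment with
colors in `{1,…,k}` whose lists on `S` use at most `k-1` colors in total, but
increasing the list size of any single vertex of `S` makes `H` `[f,k]`-choosable. -/
def Critical {VH : Type*} [DecidableEq VH] (H : SimpleGraph VH) (f : VH → ℕ)
    (k : ℕ) (S : Set VH) : Prop :=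
  (∃ L : VH → Finset ℕ, (∀ v, L v ⊆ Finset.Icc 1 k) ∧ (∀ v, (L v).card = f v) ∧
      (⋃ v ∈ S, (L v : Set ℕ)).ncard ≤ k - 1 ∧ ¬ Feasible H L) ∧
  (∀ u ∈ S, ChoosableF H (Function.update f u (f u + 1)) k)

/-- The graph `G'` built from the disjoint union of `H` and `G` by joining every
vertex of `S ⊆ V(H)` to the vertex `v₀` of `G`. -/
def joinGr {VH VG : Type*} (H : SimpleGraph VH) (G : SimpleGraph VG)
    (S : Set VH) (v₀ : VG) : SimpleGraph (VH ⊕ VG) where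
  Adj x y :=
    match x, y with
    | Sum.inl a, Sum.inl b => H.Adj a b
    | Sum.inl a, Sum.inr b => a ∈ S ∧ b = v₀
    | Sum.inr a, Sum.inl b => b ∈ S ∧ a = v₀
    | Sum.inr a, Sum.inr b => G.Adj a b
  symm := by
    constructor
    rintro (a | a) (b | b) h
    · exact h.symm
    · exact h
    · exact h
    · exact h.symm
  loopless := by
    constructor
    rintro (a | a) h
    · exact H.irrefl h
    · exact G.irrefl h

/-!
Forward direction: given an `f`-assignment `L` of `G`, pick a colour `γ ∉ L v₀`. The critical
assignment of `H` uses at most `k - 1` colours on `S`, so after renaming colours by a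
transposition it avoids `γ` on `S`. Add `γ` to the lists on `S` and at `v₀`. A colouring of `G'`
from these lists must use `γ` somewhere on `S`, since the critical assignment is infeasible;
hence `v₀` avoids `γ`, and the restriction to `G` colours `L`.

Backward direction: given an `f'`-assignment of `G'`. If some colour `c` lies in every list on
`S`, colour `S` with `c` by hypothesis (2) and colour `G` after deleting `c` from the list of
`v₀`. Otherwise colour `G` first: the colour of `v₀` is missing from the list of some `u ∈ S`,
and deleting it from the other lists on `S` leaves lists of sizes `f_H + 1` at `u` and at least
`f_H` elsewhere, for which `H` is choosable by criticality.
-/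

theorem exists_mem_Icc_notMem {U : Set ℕ} {k : ℕ} (hU : U ⊆ Finset.Icc 1 k) (h : U.ncard < k) :
    ∃ γ ∈ Finset.Icc 1 k, γ ∉ U := by
  by_contra! hsub
  have := Set.ncard_le_ncard hsub ((Finset.Icc 1 k).finite_toSet.subset hU)
  rw [Set.ncard_coe_finset, Nat.card_Icc] at this
  omega

theorem Equiv.swap_mapsTo {α : Type*} [DecidableEq α] {s : Set α} {a b : α} (ha : a ∈ s)
    (hb : b ∈ s) : Set.MapsTo (Equiv.swap a b) s s := by
  intro x hx
  rw [Equiv.swap_apply_def]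
  split_ifs <;> assumption

section ListColoring

variable {V : Type*} {G : SimpleGraph V} {L L' : V → Finset ℕ} {c : V → ℕ} {k : ℕ}

theorem IsListColoring.mono (hc : IsListColoring G L c) (h : ∀ v, L v ⊆ L' v) :
    IsListColoring G L' c :=
  ⟨fun v => h v (hc.1 v), hc.2⟩

theorem Feasible.mono (hL : Feasible G L) (h : ∀ v, L v ⊆ L' v) : Feasible G L' :=
  let ⟨c, hc⟩ := hL
  ⟨c, hc.mono h⟩

theorem Feasible.of_map_equiv (σ : ℕ ≃ ℕ) (h : Feasible G fun v => (L v).map σ.toEmbedding) :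
    Feasible G L := by
  obtain ⟨c, hmem, hadj⟩ := h
  exact ⟨σ.symm ∘ c, fun v => Finset.mem_map_equiv.mp (hmem v),
    fun u v huv h => hadj u v huv (σ.symm.injective h)⟩

theorem ChoosableF.feasible_of_le_card {f : V → ℕ} (hG : ChoosableF G f k)
    (hL : ∀ v, L v ⊆ Finset.Icc 1 k) (hcard : ∀ v, f v ≤ (L v).card) : Feasible G L := by
  choose M hM hMcard using fun v => Finset.exists_subset_card_eq (hcard v)
  exact (hG M (fun v => (hM v).trans (hL v)) hMcard).mono hM

theorem exists_infeasible_avoiding {S : Set V} (hL : ∀ v, L v ⊆ Finset.Icc 1 k)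
    (hS : (⋃ v ∈ S, (L v : Set ℕ)).ncard < k) (hinf : ¬ Feasible G L) {γ : ℕ}
    (hγ : γ ∈ Finset.Icc 1 k) :
    ∃ L' : V → Finset ℕ, (∀ v, L' v ⊆ Finset.Icc 1 k) ∧ (∀ v, (L' v).card = (L v).card) ∧
      (∀ v ∈ S, γ ∉ L' v) ∧ ¬ Feasible G L' := by
  have hUsub : (⋃ v ∈ S, (L v : Set ℕ)) ⊆ Finset.Icc 1 k :=
    Set.iUnion₂_subset fun v _ => Finset.coe_subset.mpr (hL v)
  obtain ⟨γ₀, hγ₀, hγ₀S⟩ := exists_mem_Icc_notMem hUsub hS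
  set σ := Equiv.swap γ₀ γ
  refine ⟨fun v => (L v).map σ.toEmbedding, fun v x hx => ?_, fun v => Finset.card_map _,
    fun v hv hγv => ?_, fun h => hinf (h.of_map_equiv σ)⟩
  · rw [Finset.mem_map_equiv] at hx
    simpa [σ] using Equiv.swap_mapsTo (s := (Finset.Icc 1 k : Set ℕ)) hγ₀ hγ (hL v hx)
  · rw [Finset.mem_map_equiv, Equiv.symm_swap, Equiv.swap_apply_right] at hγv
    exact hγ₀S (Set.mem_biUnion hv hγv)

end ListColoring

section joinGr

variable {VH VG : Type*} {H : SimpleGraph VH} {G : SimpleGraph VG} {S : Set VH} {v₀ : VG}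

theorem IsListColoring.sumElim_joinGr {L : VH ⊕ VG → Finset ℕ} {cH : VH → ℕ} {cG : VG → ℕ}
    (hH : IsListColoring H (L ∘ Sum.inl) cH) (hG : IsListColoring G (L ∘ Sum.inr) cG)
    (hS : ∀ v ∈ S, cH v ≠ cG v₀) : IsListColoring (joinGr H G S v₀) L (Sum.elim cH cG) := by
  refine ⟨Sum.rec hH.1 hG.1, ?_⟩
  rintro (a | a) (b | b) hab
  · exact hH.2 a b hab
  · obtain ⟨ha, rfl⟩ := hab
    exact hS a ha
  · obtain ⟨hb, rfl⟩ := hab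
    exact (hS b hb).symm
  · exact hG.2 a b hab

theorem IsListColoring.comp_inl {L : VH ⊕ VG → Finset ℕ} {c : VH ⊕ VG → ℕ}
    (hc : IsListColoring (joinGr H G S v₀) L c) :
    IsListColoring H (L ∘ Sum.inl) (c ∘ Sum.inl) :=
  ⟨fun _ => hc.1 _, fun _ _ hab => hc.2 _ _ hab⟩

theorem IsListColoring.comp_inr {L : VH ⊕ VG → Finset ℕ} {c : VH ⊕ VG → ℕ}
    (hc : IsListColoring (joinGr H G S v₀) L c) :
    IsListColoring G (L ∘ Sum.inr) (c ∘ Sum.inr) :=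
  ⟨fun _ => hc.1 _, fun _ _ hab => hc.2 _ _ hab⟩

variable {L : VH ⊕ VG → Finset ℕ} {fH : VH → ℕ} {f : VG → ℕ} {f' : VH ⊕ VG → ℕ} {k : ℕ}

theorem ChoosableF.of_joinGr (hG' : ChoosableF (joinGr H G S v₀) f' k)
    (hf'1 : ∀ v ∈ S, f' (Sum.inl v) = fH v + 1)
    (hf'2 : ∀ v : VH, v ∉ S → f' (Sum.inl v) = fH v)
    (hf'3 : f' (Sum.inr v₀) = f v₀ + 1)
    (hf'4 : ∀ v : VG, v ≠ v₀ → f' (Sum.inr v) = f v)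
    (hH : ∀ γ ∈ Finset.Icc 1 k, ∃ LH : VH → Finset ℕ, (∀ v, LH v ⊆ Finset.Icc 1 k) ∧
      (∀ v, (LH v).card = fH v) ∧ (∀ v ∈ S, γ ∉ LH v) ∧ ¬ Feasible H LH)
    (hv₀ : f v₀ < k) : ChoosableF G f k := by
  classical
  intro L hL hLcard
  obtain ⟨γ, hγ, hγv₀⟩ := exists_mem_Icc_notMem (U := L v₀) (Finset.coe_subset.mpr (hL v₀))
    (by rwa [Set.ncard_coe_finset, hLcard])
  obtain ⟨LH, hLH, hLHcard, hγS, hinf⟩ := hH γ hγ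
  let L₂ : VH ⊕ VG → Finset ℕ := Sum.elim (fun v => if v ∈ S then insert γ (LH v) else LH v)
    (fun v => if v = v₀ then insert γ (L v) else L v)
  have hL₂ : ∀ x, L₂ x ⊆ Finset.Icc 1 k := by
    rintro (v | v) <;> dsimp only [L₂, Sum.elim_inl, Sum.elim_inr] <;> split_ifs
    exacts [Finset.insert_subset hγ (hLH v), hLH v, Finset.insert_subset hγ (hL v), hL v]
  have hL₂card : ∀ x, (L₂ x).card = f' x := by
    rintro (v | v) <;> dsimp only [L₂, Sum.elim_inl, Sum.elim_inr] <;> split_ifs with hv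
    · rw [Finset.card_insert_of_notMem (hγS v hv), hLHcard, hf'1 v hv]
    · rw [hLHcard, hf'2 v hv]
    · subst hv
      rw [Finset.card_insert_of_notMem hγv₀, hLcard, hf'3]
    · rw [hLcard, hf'4 v hv]
  obtain ⟨c, hc⟩ := hG' L₂ hL₂ hL₂card
  obtain ⟨u, hu, hcu⟩ : ∃ u ∈ S, c (Sum.inl u) = γ := by
    by_contra! hne
    refine hinf ⟨c ∘ Sum.inl, fun v => ?_, hc.comp_inl.2⟩
    have hv := hc.comp_inl.1 v
    dsimp only [L₂, Function.comp_apply, Sum.elim_inl] at hv ⊢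
    split_ifs at hv with hvS
    exacts [Finset.mem_of_mem_insert_of_ne hv (hne v hvS), hv]
  refine ⟨c ∘ Sum.inr, fun v => ?_, hc.comp_inr.2⟩
  have hv := hc.comp_inr.1 v
  dsimp only [L₂, Function.comp_apply, Sum.elim_inr] at hv ⊢
  split_ifs at hv with hvv₀
  · subst hvv₀
    exact Finset.mem_of_mem_insert_of_ne hv (hcu ▸ (hc.2 (Sum.inl u) (Sum.inr _) ⟨hu, rfl⟩).symm)
  · exact hv

theorem feasible_joinGr_of_forall_mem [DecidablePred (· ∈ S)] {c : ℕ}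
    (hc : ∀ v ∈ S, c ∈ L (Sum.inl v))
    (hH : Feasible H fun v => if v ∈ S then {c} else L (Sum.inl v))
    (hG : ChoosableF G f k) (hL : ∀ v, L (Sum.inr v) ⊆ Finset.Icc 1 k)
    (hcard : ∀ v, f v ≤ (L (Sum.inr v)).card) (hcardv₀ : f v₀ < (L (Sum.inr v₀)).card) :
    Feasible (joinGr H G S v₀) L := by
  classical
  obtain ⟨cH, hcH⟩ := hH
  have hcHS : ∀ v ∈ S, cH v = c := fun v hv => by simpa [hv] using hcH.1 v
  obtain ⟨cG, hcG⟩ := hG.feasible_of_le_card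
    (L := fun v => if v = v₀ then (L (Sum.inr v)).erase c else L (Sum.inr v))
    (fun v => by split_ifs; exacts [(Finset.erase_subset _ _).trans (hL v), hL v])
    (fun v => by
      split_ifs with hv
      · subst hv
        have := Finset.pred_card_le_card_erase (s := L (Sum.inr v)) (a := c)
        omega
      · exact hcard v)
  have hcGv₀ : cG v₀ ≠ c := Finset.ne_of_mem_erase (by simpa using hcG.1 v₀)
  refine ⟨_, IsListColoring.sumElim_joinGr (hcH.mono fun v => ?_) (hcG.mono fun v => ?_)
    fun v hv => hcHS v hv ▸ hcGv₀.symm⟩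
  · split_ifs with hv
    exacts [Finset.singleton_subset_iff.mpr (hc v hv), subset_rfl]
  · split_ifs
    exacts [Finset.erase_subset _ _, subset_rfl]

theorem feasible_joinGr_of_forall_exists_notMem [DecidableEq VH]
    (hS : ∀ c, ∃ u ∈ S, c ∉ L (Sum.inl u))
    (hH : ∀ u ∈ S, ChoosableF H (Function.update fH u (fH u + 1)) k)
    (hLH : ∀ v, L (Sum.inl v) ⊆ Finset.Icc 1 k) (hcardH : ∀ v, fH v ≤ (L (Sum.inl v)).card)
    (hcardS : ∀ v ∈ S, fH v < (L (Sum.inl v)).card)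
    (hG : ChoosableF G f k) (hLG : ∀ v, L (Sum.inr v) ⊆ Finset.Icc 1 k)
    (hcardG : ∀ v, f v ≤ (L (Sum.inr v)).card) :
    Feasible (joinGr H G S v₀) L := by
  classical
  obtain ⟨cG, hcG⟩ := hG.feasible_of_le_card hLG hcardG
  obtain ⟨u, hu, hcu⟩ := hS (cG v₀)
  obtain ⟨cH, hcH⟩ := (hH u hu).feasible_of_le_card
    (L := fun v => if v ∈ S then (L (Sum.inl v)).erase (cG v₀) else L (Sum.inl v))
    (fun v => by split_ifs; exacts [(Finset.erase_subset _ _).trans (hLH v), hLH v])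
    (fun v => by
      rcases eq_or_ne v u with rfl | hvu
      · rw [Function.update_self, if_pos hu, Finset.erase_eq_of_notMem hcu]
        exact hcardS v hu
      · rw [Function.update_of_ne hvu]
        split_ifs with hv
        · have := Finset.pred_card_le_card_erase (s := L (Sum.inl v)) (a := cG v₀)
          have := hcardS v hv
          omega
        · exact hcardH v)
  refine ⟨_, IsListColoring.sumElim_joinGr (hcH.mono fun v => ?_) hcG fun v hv => ?_⟩
  · split_ifs
    exacts [Finset.erase_subset _ _, subset_rfl]
  · exact Finset.ne_of_mem_erase (by simpa only [if_pos hv] using hcH.1 v)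

theorem ChoosableF.joinGr [DecidableEq VH] (hG : ChoosableF G f k)
    (hconst : ∀ (L : VH → Finset ℕ) (c : ℕ), (∀ v, L v ⊆ Finset.Icc 1 k) →
        (∀ v ∉ S, (L v).card = fH v) → (∀ v ∈ S, L v = {c}) → Feasible H L)
    (hcrit : ∀ u ∈ S, ChoosableF H (Function.update fH u (fH u + 1)) k)
    (hf'1 : ∀ v ∈ S, f' (Sum.inl v) = fH v + 1)
    (hf'2 : ∀ v : VH, v ∉ S → f' (Sum.inl v) = fH v)
    (hf'3 : f' (Sum.inr v₀) = f v₀ + 1)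
    (hf'4 : ∀ v : VG, v ≠ v₀ → f' (Sum.inr v) = f v) :
    ChoosableF (joinGr H G S v₀) f' k := by
  classical
  intro L hL hLcard
  have hcardH : ∀ v, fH v ≤ (L (Sum.inl v)).card := fun v => by
    by_cases hv : v ∈ S
    · rw [hLcard, hf'1 v hv]; omega
    · rw [hLcard, hf'2 v hv]
  have hcardS : ∀ v ∈ S, fH v < (L (Sum.inl v)).card := fun v hv => by
    rw [hLcard, hf'1 v hv]; omega
  have hcardG : ∀ v, f v ≤ (L (Sum.inr v)).card := fun v => by
    rcases eq_or_ne v v₀ with rfl | hv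
    · rw [hLcard, hf'3]; omega
    · rw [hLcard, hf'4 v hv]
  have hcardv₀ : f v₀ < (L (Sum.inr v₀)).card := by rw [hLcard, hf'3]; omega
  by_cases hcom : ∃ c, ∀ v ∈ S, c ∈ L (Sum.inl v)
  · obtain ⟨c, hc⟩ := hcom
    refine feasible_joinGr_of_forall_mem hc (hconst _ c (fun v => ?_) (fun v hv => ?_)
      fun v hv => if_pos hv) hG (fun v => hL _) hcardG hcardv₀
    · split_ifs with hv
      exacts [Finset.singleton_subset_iff.mpr (hL _ (hc v hv)), hL _]
    · rw [if_neg hv, hLcard, hf'2 v hv]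
  · push Not at hcom
    exact feasible_joinGr_of_forall_exists_notMem hcom hcrit (fun v => hL _) hcardH hcardS hG
      (fun v => hL _) hcardG

end joinGr

theorem join_choosable_iff_general {VH VG : Type*} [DecidableEq VH]
    (H : SimpleGraph VH) (G : SimpleGraph VG) (S : Set VH) (fH : VH → ℕ) (k : ℕ)
    (hk2 : ∀ v ∈ S, fH v + 1 ≤ k)
    (hcrit : Critical H fH k S)
    (hconst : ∀ (L : VH → Finset ℕ) (c : ℕ), (∀ v, L v ⊆ Finset.Icc 1 k) →
        (∀ v ∉ S, (L v).card = fH v) → (∀ v ∈ S, L v = {c}) → Feasible H L)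
    (f : VG → ℕ) (v₀ : VG) (hv₀ : f v₀ ≤ k - 1)
    (f' : VH ⊕ VG → ℕ)
    (hf'1 : ∀ v ∈ S, f' (Sum.inl v) = fH v + 1)
    (hf'2 : ∀ v : VH, v ∉ S → f' (Sum.inl v) = fH v)
    (hf'3 : f' (Sum.inr v₀) = f v₀ + 1)
    (hf'4 : ∀ v : VG, v ≠ v₀ → f' (Sum.inr v) = f v) :
    ChoosableF (joinGr H G S v₀) f' k ↔ ChoosableF G f k := by
  obtain ⟨⟨LH, hLH, hLHcard, hLHS, hinf⟩, hcrit⟩ := hcrit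
  obtain ⟨s, hs⟩ : S.Nonempty := by
    by_contra! hS
    exact hinf (hconst LH 0 hLH (fun v _ => hLHcard v) (by simp [hS]))
  have hk : 1 ≤ k := (hk2 s hs).trans' (by omega)
  refine ⟨fun hG' => hG'.of_joinGr hf'1 hf'2 hf'3 hf'4 (fun γ hγ => ?_) (by omega),
    fun hG => hG.joinGr hconst hcrit hf'1 hf'2 hf'3 hf'4⟩
  obtain ⟨L', hL', hL'card, hγ, hinf'⟩ :=
    exists_infeasible_avoiding hLH (hLHS.trans_lt (by omega)) hinf hγ
  exact ⟨L', hL', fun v => (hL'card v).trans (hLHcard v), hγ, hinf'⟩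

/-- The gluing lemma: with `H` `([f_H,k],S)`-critical (`S` stable), and every list
assignment constant (a single color) on `S` and of sizes `f_H` elsewhere feasible,
the graph `G'` obtained by joining every vertex of `S` to `v₀ ∈ V(G)` is
`[f',k]`-choosable iff `G` is `[f,k]`-choosable, where `f'` is `f_H + 1` on `S`,
`f + 1` at `v₀`, and `f_H`, `f` elsewhere. -/
theorem join_choosable_iff {VH VG : Type*} [DecidableEq VH]
    (H : SimpleGraph VH) (G : SimpleGraph VG) (S : Set VH) (fH : VH → ℕ) (k : ℕ)
    (hstable : S.Pairwise fun u v => ¬ H.Adj u v)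
    (hk1 : ∀ v : VH, fH v ≤ k)
    (hk2 : ∀ v ∈ S, fH v + 1 ≤ k)
    (hcrit : Critical H fH k S)
    (hconst : ∀ (L : VH → Finset ℕ) (c : ℕ), (∀ v, L v ⊆ Finset.Icc 1 k) →
        (∀ v ∉ S, (L v).card = fH v) → (∀ v ∈ S, L v = {c}) → Feasible H L)
    (f : VG → ℕ) (v₀ : VG) (hf : ∀ v, f v ≤ k) (hv₀ : f v₀ ≤ k - 1)
    (f' : VH ⊕ VG → ℕ)
    (hf'1 : ∀ v ∈ S, f' (Sum.inl v) = fH v + 1)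
    (hf'2 : ∀ v : VH, v ∉ S → f' (Sum.inl v) = fH v)
    (hf'3 : f' (Sum.inr v₀) = f v₀ + 1)
    (hf'4 : ∀ v : VG, v ≠ v₀ → f' (Sum.inr v) = f v) :
    ChoosableF (joinGr H G S v₀) f' k ↔ ChoosableF G f k :=
  join_choosable_iff_general H G S fH k hk2 hcrit hconst f v₀ hv₀ f' hf'1 hf'2 hf'3 hf'4
end

section
/- Let ℓ ≥ 3 and let H = (B ∪ W, E) be the complete bipartite graph K_{C(2ℓ−2,ℓ), C(2ℓ−2,ℓ−1)} with |B| = C(2ℓ−2,ℓ) and |W| = C(2ℓ−2,ℓ−1), and let f give every vertex of B the value ℓ and every vertex of W the value ℓ−1. Then H is ([f,2ℓ−1],W)-critical: (a) there is an infeasible list assignment L with colors in {1,…,2ℓ−1}, |L(v)| = ℓ for v ∈ B, |L(v)| = ℓ−1 for v ∈ W, and |∪_{v∈W} L(v)| ≤ 2ℓ−2; (b) for every w₀ ∈ W, every list assignment with colors in {1,…,2ℓ−1} giving lists of size ℓ to all vertices of B and to w₀, and lists of size ℓ−1 to all vertices of W∖{w₀}, is feasible. -/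
open SimpleGraph

/-- If we can pick colors for the left side from `S` and the right side from `T`
with `S` and `T` disjoint, the assignment is feasible on a complete bipartite graph. -/
private lemma feasible_bipartite {nB nW : ℕ}
    (L : (Fin nB ⊕ Fin nW) → Finset ℕ) (S T : Finset ℕ) (hdisj : Disjoint S T)
    (hB : ∀ b, (L (Sum.inl b) ∩ S).Nonempty)
    (hW : ∀ w, (L (Sum.inr w) ∩ T).Nonempty) :
    Feasible (completeBipartiteGraph (Fin nB) (Fin nW)) L := by
  classical
  refine ⟨Sum.elim (fun b => (hB b).choose) (fun w => (hW w).choose), ?_, ?_⟩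
  · intro v
    cases v with
    | inl b => exact (Finset.mem_inter.1 (hB b).choose_spec).1
    | inr w => exact (Finset.mem_inter.1 (hW w).choose_spec).1
  · intro u v huv
    cases u with
    | inl b =>
      cases v with
      | inl b' => simp at huv
      | inr w =>
        have h1 : (hB b).choose ∈ S := (Finset.mem_inter.1 (hB b).choose_spec).2
        have h2 : (hW w).choose ∈ T := (Finset.mem_inter.1 (hW w).choose_spec).2
        simp only [Sum.elim_inl, Sum.elim_inr]
        intro h
        apply Finset.disjoint_left.1 hdisj h1
        rw [h]
        exact h2
    | inr w =>
      cases v with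
      | inl b =>
        have h1 : (hB b).choose ∈ S := (Finset.mem_inter.1 (hB b).choose_spec).2
        have h2 : (hW w).choose ∈ T := (Finset.mem_inter.1 (hW w).choose_spec).2
        simp only [Sum.elim_inl, Sum.elim_inr]
        intro h
        exact Finset.disjoint_left.1 hdisj h1 (h ▸ h2)
      | inr w' => simp at huv

/-- For `ℓ ≥ 3`, the complete bipartite graph
`K_{C(2ℓ−2,ℓ), C(2ℓ−2,ℓ−1)}` with list sizes `ℓ` on the part `B` and `ℓ−1` oner
the part `W` is `([f,2ℓ−1],W)`-critical:
(a) some such list assignment with palette `{1,…,2ℓ−1}` whose lists on `W` use at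
most `2ℓ−2` colors is infeasible;
(b) enlarging the list of any single vertex of `W` to size `ℓ` makes every such
assignment feasible. -/
theorem K_binom_critical (ℓ : ℕ) (hℓ : 3 ≤ ℓ) :
    (∃ L : (Fin ((2 * ℓ - 2).choose ℓ) ⊕ Fin ((2 * ℓ - 2).choose (ℓ - 1))) → Finset ℕ,
      (∀ v, L v ⊆ Finset.Icc 1 (2 * ℓ - 1)) ∧
      (∀ b, (L (Sum.inl b)).card = ℓ) ∧
      (∀ w, (L (Sum.inr w)).card = ℓ - 1) ∧
      (⋃ w, ((L (Sum.inr w) : Finset ℕ) : Set ℕ)).ncard ≤ 2 * ℓ - 2 ∧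
      ¬ Feasible
        (completeBipartiteGraph (Fin ((2 * ℓ - 2).choose ℓ)) (Fin ((2 * ℓ - 2).choose (ℓ - 1)))) L) ∧
    (∀ w₀ : Fin ((2 * ℓ - 2).choose (ℓ - 1)),
      ∀ L : (Fin ((2 * ℓ - 2).choose ℓ) ⊕ Fin ((2 * ℓ - 2).choose (ℓ - 1))) → Finset ℕ,
      (∀ v, L v ⊆ Finset.Icc 1 (2 * ℓ - 1)) →
      (∀ b, (L (Sum.inl b)).card = ℓ) →
      (L (Sum.inr w₀)).card = ℓ →
      (∀ w, w ≠ w₀ → (L (Sum.inr w)).card = ℓ - 1) →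
      Feasible
        (completeBipartiteGraph (Fin ((2 * ℓ - 2).choose ℓ)) (Fin ((2 * ℓ - 2).choose (ℓ - 1)))) L) := by
  classical
  constructor
  · -- Part (a)
    set P2 : Finset ℕ := Finset.Icc 1 (2 * ℓ - 2) with hP2
    have hP2card : P2.card = 2 * ℓ - 2 := by simp [hP2, Nat.card_Icc]
    have hBcard : (P2.powersetCard ℓ).card = (2 * ℓ - 2).choose ℓ := by
      rw [Finset.card_powersetCard, hP2card]
    have hWcard : (P2.powersetCard (ℓ - 1)).card = (2 * ℓ - 2).choose (ℓ - 1) := by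
      rw [Finset.card_powersetCard, hP2card]
    let eB : (P2.powersetCard ℓ) ≃ Fin ((2 * ℓ - 2).choose ℓ) :=
      Finset.equivFinOfCardEq hBcard
    let eW : (P2.powersetCard (ℓ - 1)) ≃ Fin ((2 * ℓ - 2).choose (ℓ - 1)) :=
      Finset.equivFinOfCardEq hWcard
    refine ⟨Sum.elim (fun b => ((eB.symm b : ) : Finset ℕ)) (fun w => ((eW.symm w : ) : Finset ℕ)),
      ?_, ?_, ?_, ?_, ?_⟩
    · intro v
      have hsub : P2 ⊆ Finset.Icc 1 (2 * ℓ - 1) := by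
        apply Finset.Icc_subset_Icc le_rfl; omega
      cases v with
      | inl b =>
        have := (eB.symm b).2
        rw [Finset.mem_powersetCard] at this
        exact this.1.trans hsub
      | inr w =>
        have := (eW.symm w).2
        rw [Finset.mem_powersetCard] at this
        exact this.1.trans hsub
    · intro b
      have := (eB.symm b).2
      rw [Finset.mem_powersetCard] at this
      exact this.2
    · intro w
      have := (eW.symm w).2
      rw [Finset.mem_powersetCard] at this
      exact this.2
    · have hsub : (⋃ w, (((Sum.elim (fun b => ((eB.symm b : ) : Finset ℕ))
          (fun w => ((eW.symm w : ) : Finset ℕ)) (Sum.inr w)) : Finset ℕ) : Set ℕ)) ⊆ (P2 : Set ℕ) := by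
        intro x hx
        simp only [Set.mem_iUnion] at hx
        obtain ⟨w, hw⟩ := hx
        have := (eW.symm w).2
        rw [Finset.mem_powersetCard] at this
        exact this.1 hw
      calc (⋃ w, (((Sum.elim (fun b => ((eB.symm b : ) : Finset ℕ))
              (fun w => ((eW.symm w : ) : Finset ℕ)) (Sum.inr w)) : Finset ℕ) : Set ℕ)).ncard
          ≤ (P2 : Set ℕ).ncard := Set.ncard_le_ncard hsub (P2.finite_toSet)
        _ = 2 * ℓ - 2 := by rw [Set.ncard_coe_finset, hP2card]
    · rintro ⟨c, hc, hproper⟩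
      set S : Finset ℕ := Finset.image (fun b => c (Sum.inl b)) Finset.univ with hS
      set T : Finset ℕ := Finset.image (fun w => c (Sum.inr w)) Finset.univ with hT
      have hSP : S ⊆ P2 := by
        intro x hx
        simp only [hS, Finset.mem_image] at hx
        obtain ⟨b, _, rfl⟩ := hx
        have h1 := hc (Sum.inl b)
        have := (eB.symm b).2
        rw [Finset.mem_powersetCard] at this
        exact this.1 h1
      have hTP : T ⊆ P2 := by
        intro x hx
        simp only [hT, Finset.mem_image] at hx
        obtain ⟨w, _, rfl⟩ := hx
        have h1 := hc (Sum.inr w)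
        have := (eW.symm w).2
        rw [Finset.mem_powersetCard] at this
        exact this.1 h1
      have hdisj : Disjoint S T := by
        rw [Finset.disjoint_left]
        intro x hxS hxT
        simp only [hS, hT, Finset.mem_image] at hxS hxT
        obtain ⟨b, _, hb⟩ := hxS
        obtain ⟨w, _, hw⟩ := hxT
        have hadj : (completeBipartiteGraph (Fin ((2 * ℓ - 2).choose ℓ))
            (Fin ((2 * ℓ - 2).choose (ℓ - 1)))).Adj (Sum.inl b) (Sum.inr w) := by simp
        exact hproper _ _ hadj (hb.trans hw.symm)
      -- every ℓ-subset of P2 meets S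
      have hhitS : ∀ A ∈ P2.powersetCard ℓ, ∃ x ∈ A, x ∈ S := by
        intro A hA
        refine ⟨c (Sum.inl (eB ⟨A, hA⟩)), ?_, ?_⟩
        · have h1 := hc (Sum.inl (eB ⟨A, hA⟩))
          simpa [Equiv.symm_apply_apply] using h1
        · simp [hS]
      have hhitT : ∀ A ∈ P2.powersetCard (ℓ - 1), ∃ x ∈ A, x ∈ T := by
        intro A hA
        refine ⟨c (Sum.inr (eW ⟨A, hA⟩)), ?_, ?_⟩
        · have h1 := hc (Sum.inr (eW ⟨A, hA⟩))
          simpa [Equiv.symm_apply_apply] using h1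
        · simp [hT]
      have hScard : ℓ - 1 ≤ S.card := by
        by_contra h
        push_neg at h
        have h2 : ℓ ≤ (P2 \ S).card := by
          have := Finset.card_sdiff_of_subset hSP
          omega
        obtain ⟨A, hA1, hA2⟩ := Finset.exists_subset_card_eq h2
        have hAmem : A ∈ P2.powersetCard ℓ := by
          rw [Finset.mem_powersetCard]
          exact ⟨hA1.trans (Finset.sdiff_subset), hA2⟩
        obtain ⟨x, hx1, hx2⟩ := hhitS A hAmem
        exact (Finset.mem_sdiff.1 (hA1 hx1)).2 hx2
      have hTcard : ℓ ≤ T.card := by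
        by_contra h
        push_neg at h
        have h2 : ℓ - 1 ≤ (P2 \ T).card := by
          have := Finset.card_sdiff_of_subset hTP
          omega
        obtain ⟨A, hA1, hA2⟩ := Finset.exists_subset_card_eq h2
        have hAmem : A ∈ P2.powersetCard (ℓ - 1) := by
          rw [Finset.mem_powersetCard]
          exact ⟨hA1.trans (Finset.sdiff_subset), hA2⟩
        obtain ⟨x, hx1, hx2⟩ := hhitT A hAmem
        exact (Finset.mem_sdiff.1 (hA1 hx1)).2 hx2
      have hunion : S.card + T.card ≤ 2 * ℓ - 2 := by
        rw [← Finset.card_union_of_disjoint hdisj, ← hP2card]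
        exact Finset.card_le_card (Finset.union_subset hSP hTP)
      omega
  · -- Part (b)
    intro w₀ L hLP hLB hLw₀ hLW
    by_contra hinf
    set P : Finset ℕ := Finset.Icc 1 (2 * ℓ - 1) with hP
    have hPcard : P.card = 2 * ℓ - 1 := by simp [hP, Nat.card_Icc]
    -- key: every (ℓ-1)-subset S of P is either some W-list (w ≠ w₀) or the
    -- complement of some B-list
    have key : ∀ S ∈ P.powersetCard (ℓ - 1),
        (∃ w, w ≠ w₀ ∧ L (Sum.inr w) = S) ∨ (∃ b, L (Sum.inl b) = P \ S) := by
      intro S hS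
      rw [Finset.mem_powersetCard] at hS
      by_contra h
      push_neg at h
      obtain ⟨h1, h2⟩ := h
      apply hinf
      have hPS : (P \ S).card = ℓ := by
        rw [Finset.card_sdiff_of_subset hS.1, hPcard, hS.2]
        omega
      apply feasible_bipartite L S (P \ S) (Finset.disjoint_sdiff)
      · intro b
        rw [Finset.nonempty_iff_ne_empty]
        intro hemp
        have hsub : L (Sum.inl b) ⊆ P \ S := by
          intro x hx
          rw [Finset.mem_sdiff]
          refine ⟨hLP _ hx, ?_⟩
          intro hxS
          have : x ∈ L (Sum.inl b) ∩ S := Finset.mem_inter.2 ⟨hx, hxS⟩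
          simp [hemp] at this
        have heq : L (Sum.inl b) = P \ S :=
          Finset.eq_of_subset_of_card_le hsub (by rw [hPS, hLB])
        exact h2 b heq
      · intro w
        rw [Finset.nonempty_iff_ne_empty]
        intro hemp
        have hsub : L (Sum.inr w) ⊆ S := by
          intro x hx
          by_contra hxS
          have : x ∈ L (Sum.inr w) ∩ (P \ S) :=
            Finset.mem_inter.2 ⟨hx, Finset.mem_sdiff.2 ⟨hLP _ hx, hxS⟩⟩
          simp [hemp] at this
        by_cases hw : w = w₀
        · subst hw
          have := Finset.card_le_card hsub
          rw [hLw₀, hS.2] at this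
          omega
        · have heq : L (Sum.inr w) = S :=
            Finset.eq_of_subset_of_card_le hsub (by rw [hS.2, hLW w hw])
          exact h1 w hw heq
    -- counting
    have hsubset : P.powersetCard (ℓ - 1) ⊆
        ((Finset.univ.erase w₀).image (fun w => L (Sum.inr w))) ∪
        (Finset.univ.image (fun b => P \ L (Sum.inl b))) := by
      intro S hS
      rcases key S hS with ⟨w, hw, heq⟩ | ⟨b, heq⟩
      · apply Finset.mem_union_left
        exact Finset.mem_image.2 ⟨w, Finset.mem_erase.2 ⟨hw, Finset.mem_univ w⟩, heq⟩
      · apply Finset.mem_union_right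
        refine Finset.mem_image.2 ⟨b, Finset.mem_univ b, ?_⟩
        rw [heq, Finset.sdiff_sdiff_eq_self (Finset.mem_powersetCard.1 hS).1]
    have hcount : (P.powersetCard (ℓ - 1)).card ≤
        ((2 * ℓ - 2).choose (ℓ - 1) - 1) + (2 * ℓ - 2).choose ℓ := by
      calc (P.powersetCard (ℓ - 1)).card
          ≤ ((Finset.univ.erase w₀).image (fun w => L (Sum.inr w))).card +
            (Finset.univ.image (fun b => P \ L (Sum.inl b))).card :=
            le_trans (Finset.card_le_card hsubset) (Finset.card_union_le _ _)
        _ ≤ (Finset.univ.erase w₀).card + (Finset.univ : Finset (Fin ((2 * ℓ - 2).choose ℓ))).card :=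
            Nat.add_le_add (Finset.card_image_le) (Finset.card_image_le)
        _ = ((2 * ℓ - 2).choose (ℓ - 1) - 1) + (2 * ℓ - 2).choose ℓ := by
            rw [Finset.card_erase_of_mem (Finset.mem_univ w₀)]
            simp
    have hpcc : (P.powersetCard (ℓ - 1)).card = (2 * ℓ - 1).choose (ℓ - 1) := by
      rw [Finset.card_powersetCard, hPcard]
    -- arithmetic with binomial coefficients
    have hpascal : (2 * ℓ - 1).choose (ℓ - 1) =
        (2 * ℓ - 2).choose (ℓ - 2) + (2 * ℓ - 2).choose (ℓ - 1) := by
      have e1 : 2 * ℓ - 1 = (2 * ℓ - 2) + 1 := by omega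
      have e2 : ℓ - 1 = (ℓ - 2) + 1 := by omega
      have e3 : (ℓ - 2).succ = ℓ - 1 := by omega
      rw [e1, e2, Nat.choose_succ_succ, e3, show ℓ - 2 + 1 = ℓ - 1 from by omega]
    have hsymm : (2 * ℓ - 2).choose (ℓ - 2) = (2 * ℓ - 2).choose ℓ := by
      have := Nat.choose_symm (show ℓ ≤ 2 * ℓ - 2 by omega)
      have e : 2 * ℓ - 2 - ℓ = ℓ - 2 := by omega
      rw [e] at this
      exact this
    have hpos : 1 ≤ (2 * ℓ - 2).choose (ℓ - 1) :=
      Nat.choose_pos (by omega)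
    omega
end
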